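/- arXiv:0905.4100 — 10 statements merged into one kernel-verified Lean document; each statement's English description precedes it below -/
import Mathlib

section
/- For the 6-cycle instance, no deterministic online algorithm achieves an expected approximation factor better than 26/27. Precisely: for every deterministic online strategy σ (as defined in the context), the average over all 27 equally likely scenarios s ∈ I³ of ALG_σ(s)/OPT(s) is at most 26/27. -/
/-- Adjacency of the 6-cycle instance: impressions x = 0, y = 1, z = 2;
advertisers a = 0, b = 1, c = 2; N(x) = {a,c}, N(y) = {a,b}, N(z) = {b,c}. -/
def sixCycleN : Fin 3 → Finset (Fin 3) := ![{0, 2}, {0, 1}, {1, 2}]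

/-- The number of impressions assigned by the deterministic online strategy `σ`
on scenario `s`, i.e. the number of steps `t` with `σ t s ≠ none`. -/
def sixCycleALG (σ : Fin 3 → (Fin 3 → Fin 3) → Option (Fin 3)) (s : Fin 3 → Fin 3) : ℕ :=
  (Finset.univ.filter (fun t => (σ t s).isSome)).card

/-- The maximum matching size of the realization graph of scenario `s`:
the largest number of steps that can be injectively assigned to neighboring
advertisers. -/
def sixCycleOPT (s : Fin 3 → Fin 3) : ℕ :=
  Finset.sup
    (Finset.univ.filter (fun g : Fin 3 → Option (Fin 3) =>
      (∀ t a, g t = some a → a ∈ sixCycleN (s t)) ∧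
      (∀ t t' a, g t = some a → g t' = some a → t = t')))
    (fun g => (Finset.univ.filter (fun t => (g t).isSome)).card)

lemma alg_le_two (σ : Fin 3 → (Fin 3 → Fin 3) → Option (Fin 3)) (s : Fin 3 → Fin 3)
    (t : Fin 3) (h : σ t s = none) : sixCycleALG σ s ≤ 2 := by
  unfold sixCycleALG
  have hsub : Finset.univ.filter (fun u => (σ u s).isSome) ⊆ Finset.univ.erase t := by
    intro u hu
    simp only [Finset.mem_filter, Finset.mem_univ, true_and] at hu
    refine Finset.mem_erase.mpr ⟨?_, Finset.mem_univ u⟩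
    rintro rfl
    rw [h] at hu
    simp at hu
  calc (Finset.univ.filter (fun u => (σ u s).isSome)).card
      ≤ (Finset.univ.erase t).card := Finset.card_le_card hsub
    _ ≤ 2 := by rw [Finset.card_erase_of_mem (Finset.mem_univ t)]; simp

lemma alg_le_opt (σ : Fin 3 → (Fin 3 → Fin 3) → Option (Fin 3))
    (hvalid : ∀ (s : Fin 3 → Fin 3) (t : Fin 3) (a : Fin 3), σ t s = some a →
      a ∈ sixCycleN (s t) ∧ ∀ t' < t, σ t' s ≠ some a)
    (s : Fin 3 → Fin 3) : sixCycleALG σ s ≤ sixCycleOPT s := by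
  unfold sixCycleALG sixCycleOPT
  apply Finset.le_sup (f := fun g : Fin 3 → Option (Fin 3) =>
    (Finset.univ.filter (fun t => (g t).isSome)).card)
  simp only [Finset.mem_filter, Finset.mem_univ, true_and]
  refine ⟨fun t a h => (hvalid s t a h).1, fun t t' a h h' => ?_⟩
  by_contra hne
  rcases lt_or_gt_of_ne hne with hlt | hlt
  · exact (hvalid s t' a h').2 t hlt h
  · exact (hvalid s t a h).2 t' hlt h'

lemma step_lemma (σ : Fin 3 → (Fin 3 → Fin 3) → Option (Fin 3))
    (hvalid : ∀ (s : Fin 3 → Fin 3) (t : Fin 3) (a : Fin 3), σ t s = some a →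
      a ∈ sixCycleN (s t) ∧ ∀ t' < t, σ t' s ≠ some a)
    (s : Fin 3 → Fin 3) (a0 b : Fin 3) (h0 : σ 0 s = some a0)
    (hsub1 : sixCycleN (s 1) ⊆ {a0, b}) (hsub2 : sixCycleN (s 2) ⊆ {a0, b}) :
    sixCycleALG σ s ≤ 2 := by
  rcases h1 : σ 1 s with _ | c
  · exact alg_le_two σ s 1 h1
  · have hc := hvalid s 1 c h1
    have hcb : c = b := by
      have hmem := hsub1 hc.1
      simp only [Finset.mem_insert, Finset.mem_singleton] at hmem
      rcases hmem with rfl | rfl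
      · exact absurd h0 (hc.2 0 (by decide))
      · rfl
    rcases h2 : σ 2 s with _ | d
    · exact alg_le_two σ s 2 h2
    · exfalso
      have hd := hvalid s 2 d h2
      have hmem := hsub2 hd.1
      simp only [Finset.mem_insert, Finset.mem_singleton] at hmem
      rcases hmem with rfl | rfl
      · exact hd.2 0 (by decide) h0
      · subst hcb; exact hd.2 1 (by decide) h1

lemma key (σ : Fin 3 → (Fin 3 → Fin 3) → Option (Fin 3))
    (honline : ∀ (t : Fin 3) (s s' : Fin 3 → Fin 3),
      (∀ t' ≤ t, s t' = s' t') → σ t s = σ t s')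
    (hvalid : ∀ (s : Fin 3 → Fin 3) (t : Fin 3) (a : Fin 3), σ t s = some a →
      a ∈ sixCycleN (s t) ∧ ∀ t' < t, σ t' s ≠ some a)
    (i : Fin 3) :
    ∃ s : Fin 3 → Fin 3, s 0 = i ∧ sixCycleALG σ s ≤ 2 ∧ sixCycleOPT s = 3 := by
  have htrans : ∀ (s s' : Fin 3 → Fin 3), s 0 = s' 0 → σ 0 s = σ 0 s' := by
    intro s s' h
    exact honline 0 s s' (fun t' ht' => by
      have : t' = 0 := le_antisymm ht' (Fin.zero_le t')
      rw [this, h])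
  fin_cases i
  · -- i = 0, N(0) = {0,2}
    rcases h0 : σ 0 ![0,0,0] with _ | a
    · exact ⟨![0,1,1], rfl, alg_le_two σ _ 0 ((htrans ![0,1,1] ![0,0,0] rfl).trans h0),
        by decide⟩
    · have ha := (hvalid _ 0 a h0).1
      fin_cases ha
      · -- a = 0, pair impression 1 with N(1)={0,1}, b = 1
        exact ⟨![0,1,1], rfl,
          step_lemma σ hvalid _ 0 1 ((htrans ![0,1,1] ![0,0,0] rfl).trans h0) (by decide) (by decide),
          by decide⟩
      · -- a = 2, pair impression 2 with N(2)={1,2}, b = 1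
        exact ⟨![0,2,2], rfl,
          step_lemma σ hvalid _ 2 1 ((htrans ![0,2,2] ![0,0,0] rfl).trans h0) (by decide) (by decide),
          by decide⟩
  · -- i = 1, N(1) = {0,1}
    rcases h0 : σ 0 ![1,1,1] with _ | a
    · exact ⟨![1,0,0], rfl, alg_le_two σ _ 0 ((htrans ![1,0,0] ![1,1,1] rfl).trans h0),
        by decide⟩
    · have ha := (hvalid _ 0 a h0).1
      fin_cases ha
      · -- a = 0, pair impression 0 with N(0)={0,2}, b = 2
        exact ⟨![1,0,0], rfl,
          step_lemma σ hvalid _ 0 2 ((htrans ![1,0,0] ![1,1,1] rfl).trans h0) (by decide) (by decide),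
          by decide⟩
      · -- a = 1, pair impression 2 with N(2)={1,2}, b = 2
        exact ⟨![1,2,2], rfl,
          step_lemma σ hvalid _ 1 2 ((htrans ![1,2,2] ![1,1,1] rfl).trans h0) (by decide) (by decide),
          by decide⟩
  · -- i = 2, N(2) = {1,2}
    rcases h0 : σ 0 ![2,2,2] with _ | a
    · exact ⟨![2,1,1], rfl, alg_le_two σ _ 0 ((htrans ![2,1,1] ![2,2,2] rfl).trans h0),
        by decide⟩
    · have ha := (hvalid _ 0 a h0).1
      fin_cases ha
      · -- a = 1, pair impression 1 with N(1)={0,1}, b = 0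
        exact ⟨![2,1,1], rfl,
          step_lemma σ hvalid _ 1 0 ((htrans ![2,1,1] ![2,2,2] rfl).trans h0) (by decide) (by decide),
          by decide⟩
      · -- a = 2, pair impression 0 with N(0)={0,2}, b = 0
        exact ⟨![2,0,0], rfl,
          step_lemma σ hvalid _ 2 0 ((htrans ![2,0,0] ![2,2,2] rfl).trans h0) (by decide) (by decide),
          by decide⟩

/-- For the 6-cycle instance, no deterministic online algorithm achieves an
expected approximation factor better than 26/27: for every deterministic online
strategy `σ` (whose decision at step `t` depends only on the prefix
`s 0, …, s t` and which makes only valid, non-repeating assignments), the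
average over all 27 equally likely scenarios `s ∈ I³` of `ALG_σ(s) / OPT(s)`
is at most `26 / 27`. -/
theorem six_cycle_hardness
    (σ : Fin 3 → (Fin 3 → Fin 3) → Option (Fin 3))
    (honline : ∀ (t : Fin 3) (s s' : Fin 3 → Fin 3),
      (∀ t' ≤ t, s t' = s' t') → σ t s = σ t s')
    (hvalid : ∀ (s : Fin 3 → Fin 3) (t : Fin 3) (a : Fin 3), σ t s = some a →
      a ∈ sixCycleN (s t) ∧ ∀ t' < t, σ t' s ≠ some a) :
    (∑ s : Fin 3 → Fin 3, (sixCycleALG σ s : ℝ) / (sixCycleOPT s : ℝ)) / 27 ≤ 26 / 27 := by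
  have hratio1 : ∀ s : Fin 3 → Fin 3, (sixCycleALG σ s : ℝ) / (sixCycleOPT s : ℝ) ≤ 1 := by
    intro s
    rcases Nat.eq_zero_or_pos (sixCycleOPT s) with h | h
    · have : sixCycleALG σ s = 0 := Nat.le_zero.mp (h ▸ alg_le_opt σ hvalid s)
      simp [this]
    · rw [div_le_one (by exact_mod_cast h)]
      exact_mod_cast alg_le_opt σ hvalid s
  obtain ⟨sA, hA0, hA2, hAopt⟩ := key σ honline hvalid 0
  obtain ⟨sB, hB0, hB2, hBopt⟩ := key σ honline hvalid 1
  obtain ⟨sC, hC0, hC2, hCopt⟩ := key σ honline hvalid 2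
  have hAB : sA ≠ sB := fun h => by rw [h, hB0] at hA0; exact absurd hA0 (by decide)
  have hAC : sA ≠ sC := fun h => by rw [h, hC0] at hA0; exact absurd hA0 (by decide)
  have hBC : sB ≠ sC := fun h => by rw [h, hC0] at hB0; exact absurd hB0 (by decide)
  set T : Finset (Fin 3 → Fin 3) := {sA, sB, sC} with hT
  have hcardT : T.card = 3 := by
    rw [hT, Finset.card_insert_of_notMem (by simp [hAB, hAC]),
      Finset.card_insert_of_notMem (by simp [hBC]), Finset.card_singleton]
  have hratio23 : ∀ s ∈ T, (sixCycleALG σ s : ℝ) / (sixCycleOPT s : ℝ) ≤ 2/3 := by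
    intro s hs
    have : sixCycleALG σ s ≤ 2 ∧ sixCycleOPT s = 3 := by
      simp only [hT, Finset.mem_insert, Finset.mem_singleton] at hs
      rcases hs with rfl | rfl | rfl
      exacts [⟨hA2, hAopt⟩, ⟨hB2, hBopt⟩, ⟨hC2, hCopt⟩]
    rw [this.2]
    have h2 : (sixCycleALG σ s : ℝ) ≤ 2 := by exact_mod_cast this.1
    push_cast
    linarith [h2]
  have hsplit : (∑ s : Fin 3 → Fin 3, (sixCycleALG σ s : ℝ) / (sixCycleOPT s : ℝ))
      = (∑ s ∈ Finset.univ \ T, (sixCycleALG σ s : ℝ) / (sixCycleOPT s : ℝ))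
      + (∑ s ∈ T, (sixCycleALG σ s : ℝ) / (sixCycleOPT s : ℝ)) :=
    (Finset.sum_sdiff (Finset.subset_univ T)).symm
  have hcard : (Finset.univ \ T).card = 24 := by
    rw [Finset.card_sdiff_of_subset (Finset.subset_univ T), hcardT]
    simp [Finset.card_univ]
  have h1 : (∑ s ∈ Finset.univ \ T, (sixCycleALG σ s : ℝ) / (sixCycleOPT s : ℝ)) ≤ 24 := by
    calc (∑ s ∈ Finset.univ \ T, (sixCycleALG σ s : ℝ) / (sixCycleOPT s : ℝ))
        ≤ ∑ _s ∈ Finset.univ \ T, (1:ℝ) :=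
          Finset.sum_le_sum (fun s _ => hratio1 s)
      _ = 24 := by rw [Finset.sum_const, hcard]; norm_num
  have h2 : (∑ s ∈ T, (sixCycleALG σ s : ℝ) / (sixCycleOPT s : ℝ)) ≤ 2 := by
    calc (∑ s ∈ T, (sixCycleALG σ s : ℝ) / (sixCycleOPT s : ℝ))
        ≤ ∑ _s ∈ T, (2/3 : ℝ) := Finset.sum_le_sum hratio23
      _ = 2 := by rw [Finset.sum_const, hcardT]; norm_num
  rw [hsplit]
  linarith
end

section
/- Let n ≥ 1 and let f : Fin n → Fin n be a uniformly random function. For any subset B of the bins, let S = |{b ∈ B : ∃ j, f(j) = b}| be the number of bins of B receiving at least one ball. Then |B|·(1 − 1/e) ≤ E[S] ≤ |B|·(1 − 1/e + 1/(e·n)). -/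
lemma miss_count (n : ℕ) (b : Fin n) :
    (Finset.univ.filter (fun f : Fin n → Fin n => ∀ j, f j ≠ b)).card = (n-1)^n := by
  rw [← Fintype.card_subtype]
  rw [Fintype.card_congr (Equiv.subtypePiEquivPi (p := fun _ x => x ≠ b))]
  simp [Fintype.card_subtype_compl]

lemma hit_count (n : ℕ) (b : Fin n) :
    (Finset.univ.filter (fun f : Fin n → Fin n => ∃ j, f j = b)).card = n^n - (n-1)^n := by
  have h := Finset.card_filter_add_card_filter_not
    (s := (Finset.univ : Finset (Fin n → Fin n)))
    (p := fun f => ∃ j, f j = b)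
  simp only [not_exists] at h
  rw [miss_count] at h
  have hc : (Finset.univ : Finset (Fin n → Fin n)).card = n^n := by
    simp [Fintype.card_fun]
  rw [hc] at h
  exact Nat.eq_sub_of_add_eq h

lemma key_sum (n : ℕ) (hn : 1 ≤ n) (B : Finset (Fin n)) :
    (∑ f : Fin n → Fin n, ((B.filter (fun b => ∃ j, f j = b)).card : ℝ))
      = (B.card : ℝ) * ((n:ℝ)^n - ((n:ℝ)-1)^n) := by
  have : ∀ f : Fin n → Fin n,
      ((B.filter (fun b => ∃ j, f j = b)).card : ℝ)
        = ∑ b ∈ B, (if ∃ j, f j = b then (1:ℝ) else 0) := by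
    intro f; rw [Finset.card_filter]; push_cast; rfl
  simp only [this]
  rw [Finset.sum_comm]
  have hb : ∀ b ∈ B, (∑ f : Fin n → Fin n, (if ∃ j, f j = b then (1:ℝ) else 0))
      = (n:ℝ)^n - ((n:ℝ)-1)^n := by
    intro b _
    rw [Finset.sum_boole, hit_count]
    have hle : (n-1)^n ≤ n^n := Nat.pow_le_pow_left (Nat.sub_le n 1) n
    rw [Nat.cast_sub hle]
    push_cast [Nat.cast_sub hn]
    ring
  rw [Finset.sum_congr rfl hb, Finset.sum_const, nsmul_eq_mul]

lemma upper_exp (n : ℕ) (hn : 1 ≤ n) :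
    (((n:ℝ)-1)/n)^n ≤ Real.exp (-1) := by
  have hn0 : (0:ℝ) < n := by exact_mod_cast hn
  have h1 : ((n:ℝ)-1)/n ≤ Real.exp (-1/n) := by
    have h := Real.add_one_le_exp (-1/(n:ℝ))
    have : ((n:ℝ)-1)/n = -1/n + 1 := by field_simp; ring
    linarith
  have h0 : (0:ℝ) ≤ ((n:ℝ)-1)/n := by
    apply div_nonneg _ hn0.le
    have : (1:ℝ) ≤ n := by exact_mod_cast hn
    linarith
  calc (((n:ℝ)-1)/n)^n ≤ (Real.exp (-1/n))^n := pow_le_pow_left₀ h0 h1 n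
    _ = Real.exp (-1) := by
        rw [← Real.exp_nat_mul]; congr 1; field_simp

lemma lower_exp (n : ℕ) (hn : 1 ≤ n) :
    Real.exp (-1) * (1 - 1/(n:ℝ)) ≤ (((n:ℝ)-1)/n)^n := by
  have hn0 : (0:ℝ) < n := by exact_mod_cast hn
  set x : ℝ := ((n:ℝ)-1)/n with hx
  have hx_eq : 1 - 1/(n:ℝ) = x := by rw [hx]; field_simp
  rw [hx_eq]
  rcases eq_or_lt_of_le hn with h1 | h2
  · have : n = 1 := h1.symm
    subst this
    norm_num [hx]
  · have h2' : (2:ℝ) ≤ n := by exact_mod_cast h2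
    have hm0 : (0:ℝ) < (n:ℝ)-1 := by linarith
    have hx0 : 0 < x := div_pos hm0 hn0
    have hinv : x⁻¹ = (n:ℝ)/((n:ℝ)-1) := by rw [hx, inv_div]
    have hstep : x⁻¹ ≤ Real.exp (1/((n:ℝ)-1)) := by
      have h := Real.add_one_le_exp (1/((n:ℝ)-1))
      have heq : (n:ℝ)/((n:ℝ)-1) = 1/((n:ℝ)-1) + 1 := by field_simp; ring
      rw [hinv, heq]; linarith
    have hpow : x⁻¹^(n-1) ≤ Real.exp 1 := by
      calc x⁻¹^(n-1) ≤ (Real.exp (1/((n:ℝ)-1)))^(n-1) :=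
            pow_le_pow_left₀ (inv_nonneg.2 hx0.le) hstep _
        _ = Real.exp 1 := by
            rw [← Real.exp_nat_mul]
            congr 1
            have hc : ((n-1:ℕ):ℝ) = (n:ℝ)-1 := by
              push_cast [Nat.cast_sub hn]; ring
            rw [hc]; field_simp
    have hkey : Real.exp (-1) ≤ x^(n-1) := by
      rw [Real.exp_neg]
      have h3 : (Real.exp 1)⁻¹ ≤ (x⁻¹^(n-1))⁻¹ :=
        inv_anti₀ (pow_pos (inv_pos.2 hx0) _) hpow
      rwa [← inv_pow, inv_inv] at h3
    calc Real.exp (-1) * x ≤ x^(n-1) * x := mul_le_mul_of_nonneg_right hkey hx0.le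
      _ = x^n := by rw [← pow_succ]; congr 1; omega

/-- Balls in bins: `n` balls thrown i.i.d. uniformly into `n` bins,
i.e. `f : Fin n → Fin n` is a uniformly random function.  For a subset `B`
of the bins, the expected number `E[S]` of bins of `B` receiving at least one
ball satisfies `|B|·(1 − 1/e) ≤ E[S] ≤ |B|·(1 − 1/e + 1/(e·n))`. -/
theorem balls_in_bins_expectation_bounds (n : ℕ) (hn : 1 ≤ n) (B : Finset (Fin n)) :
    (B.card : ℝ) * (1 - 1 / Real.exp 1)
        ≤ (∑ f : Fin n → Fin n, ((B.filter (fun b => ∃ j, f j = b)).card : ℝ)) / (n : ℝ) ^ n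
      ∧ (∑ f : Fin n → Fin n, ((B.filter (fun b => ∃ j, f j = b)).card : ℝ)) / (n : ℝ) ^ n
        ≤ (B.card : ℝ) * (1 - 1 / Real.exp 1 + 1 / (Real.exp 1 * n)) := by
  have hn0 : (0:ℝ) < n := by exact_mod_cast hn
  have hpow : (0:ℝ) < (n:ℝ)^n := pow_pos hn0 n
  rw [key_sum n hn B]
  set c : ℝ := (((n:ℝ)-1)/n)^n with hc
  have hE : (B.card : ℝ) * ((n:ℝ)^n - ((n:ℝ)-1)^n) / (n:ℝ)^n = (B.card:ℝ) * (1 - c) := by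
    rw [mul_div_assoc]
    congr 1
    rw [hc, div_pow]
    field_simp
  rw [hE]
  have hexp : (0:ℝ) < Real.exp 1 := Real.exp_pos 1
  constructor
  · apply mul_le_mul_of_nonneg_left _ (Nat.cast_nonneg _)
    have h := upper_exp n hn
    rw [Real.exp_neg, ← one_div] at h
    linarith
  · apply mul_le_mul_of_nonneg_left _ (Nat.cast_nonneg _)
    have hl := lower_exp n hn
    rw [Real.exp_neg, ← one_div] at hl
    have hmul : (1/Real.exp 1) * (1 - 1/(n:ℝ)) = 1/Real.exp 1 - 1/(Real.exp 1 * n) := by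
      field_simp
    linarith
end

section
/- Let n ≥ 1 and let f : Fin n → Fin n be a uniformly random function. For any subset B of the bins, let S = |{b ∈ B : ∃ j, f(j) = b}| be the number of bins of B receiving at least one ball. Then for every ε > 0, with probability at least 1 − 2·e^{−ε²n/2} we have |B|·(1 − 1/e) − εn ≤ S ≤ |B|·(1 − 1/e + 1/(e·n)) + εn. -/
attribute [local instance] Classical.propDecidable

open Finset

lemma exp_avg_le {κ : Type*} [Fintype κ] [Nonempty κ] (X : κ → ℝ) (t : ℝ)
    (h0 : ∑ x, X x = 0) (h1 : ∀ x, |X x| ≤ 1) :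
    (∑ x, Real.exp (t * X x)) / (Fintype.card κ : ℝ) ≤ Real.exp (t ^ 2 / 2) := by
  have key : ∀ x, Real.exp (t * X x) ≤
      Real.cosh t + X x * Real.sinh t := by
    intro x
    have hx := h1 x
    have ha : (0:ℝ) ≤ (1 - X x) / 2 := by
      have := (abs_le.mp hx).2; linarith
    have hb : (0:ℝ) ≤ (1 + X x) / 2 := by
      have := (abs_le.mp hx).1; linarith
    have hab : (1 - X x)/2 + (1 + X x)/2 = 1 := by ring
    have := convexOn_exp.2 (Set.mem_univ (-t)) (Set.mem_univ t) ha hb hab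
    simp only [smul_eq_mul] at this
    have harg : (1 - X x)/2 * (-t) + (1 + X x)/2 * t = t * X x := by ring
    rw [harg] at this
    calc Real.exp (t * X x) ≤ (1 - X x)/2 * Real.exp (-t) + (1 + X x)/2 * Real.exp t := this
      _ = Real.cosh t + X x * Real.sinh t := by
          rw [Real.cosh_eq, Real.sinh_eq]; ring
  have hsum : ∑ x, Real.exp (t * X x) ≤ (Fintype.card κ : ℝ) * Real.cosh t := by
    calc ∑ x, Real.exp (t * X x) ≤ ∑ x, (Real.cosh t + X x * Real.sinh t) :=
          Finset.sum_le_sum fun x _ => key x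
      _ = (Fintype.card κ : ℝ) * Real.cosh t + (∑ x, X x) * Real.sinh t := by
          rw [Finset.sum_add_distrib, ← Finset.sum_mul]
          simp [Finset.card_univ, mul_comm]
      _ = (Fintype.card κ : ℝ) * Real.cosh t := by rw [h0]; ring
  have hcard : (0:ℝ) < (Fintype.card κ : ℝ) := by
    exact_mod_cast Fintype.card_pos
  rw [div_le_iff₀ hcard]
  calc ∑ x, Real.exp (t * X x) ≤ (Fintype.card κ : ℝ) * Real.cosh t := hsum
    _ ≤ (Fintype.card κ : ℝ) * Real.exp (t ^ 2 / 2) := by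
        exact mul_le_mul_of_nonneg_left (Real.cosh_le_exp_half_sq t) hcard.le
    _ = Real.exp (t ^ 2 / 2) * (Fintype.card κ : ℝ) := mul_comm _ _
lemma mcdiarmid_mgf (m : ℕ) {κ : Type} [Fintype κ] [Nonempty κ] (h : (Fin m → κ) → ℝ) (t : ℝ)
    (bd : ∀ (i : Fin m) (f g : Fin m → κ), (∀ j, j ≠ i → f j = g j) → |h f - h g| ≤ 1) :
    (∑ f, Real.exp (t * (h f - (∑ g, h g) / (Fintype.card (Fin m → κ) : ℝ))))
        / (Fintype.card (Fin m → κ) : ℝ) ≤ Real.exp (t ^ 2 * m / 2) := by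
  induction m with
  | zero =>
      haveI : Unique (Fin 0 → κ) := ⟨⟨fun i => i.elim0⟩, fun f => funext fun i => i.elim0⟩
      rw [Fintype.card_unique]
      simp [Finset.univ_unique]
  | succ m ih =>
      set c : ℝ := (Fintype.card κ : ℝ) with hc
      have hc0 : (0:ℝ) < c := by rw [hc]; exact_mod_cast Fintype.card_pos
      have hcm0 : (0:ℝ) < (Fintype.card (Fin m → κ) : ℝ) := by exact_mod_cast Fintype.card_pos
      have hdec : ∀ F : (Fin (m+1) → κ) → ℝ,
          ∑ f, F f = ∑ g : Fin m → κ, ∑ x : κ, F (Fin.cons x g) := by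
        intro F
        rw [← Equiv.sum_comp (Fin.consEquiv fun _ => κ) F, Fintype.sum_prod_type]
        rw [Finset.sum_comm]
        rfl
      set H : (Fin m → κ) → ℝ := fun g => (∑ x : κ, h (Fin.cons x g)) / c with hH
      have hHdef : ∀ g, H g = (∑ x : κ, h (Fin.cons x g)) / c := fun g => rfl
      have hcard : (Fintype.card (Fin (m+1) → κ) : ℝ)
          = c * (Fintype.card (Fin m → κ) : ℝ) := by
        rw [hc, ← Nat.cast_mul]
        congr 1
        simp [Fintype.card_fun, pow_succ, Nat.mul_comm]
      set μ : ℝ := (∑ g, H g) / (Fintype.card (Fin m → κ) : ℝ) with hμ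
      have hmean : (∑ f, h f) / (Fintype.card (Fin (m+1) → κ) : ℝ) = μ := by
        have h1 : ∑ f, h f = c * ∑ g, H g := by
          rw [hdec h, Finset.mul_sum]
          refine Finset.sum_congr rfl fun g _ => ?_
          rw [hHdef g, mul_div_cancel₀ _ hc0.ne']
        rw [h1, hcard, hμ, mul_div_mul_left _ _ hc0.ne']
      have inner : ∀ g : Fin m → κ,
          ∑ x : κ, Real.exp (t * (h (Fin.cons x g) - H g)) ≤ c * Real.exp (t^2/2) := by
        intro g
        have key := exp_avg_le (fun x => h (Fin.cons x g) - H g) t ?_ ?_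
        · rw [div_le_iff₀ hc0] at key
          calc ∑ x : κ, Real.exp (t * (h (Fin.cons x g) - H g))
              ≤ Real.exp (t^2/2) * c := key
            _ = c * Real.exp (t^2/2) := mul_comm _ _
        · show ∑ x : κ, (h (Fin.cons x g) - H g) = 0
          rw [Finset.sum_sub_distrib, Finset.sum_const, Finset.card_univ, hHdef g,
            nsmul_eq_mul, ← hc, mul_div_cancel₀ _ hc0.ne', sub_self]
        · intro x
          show |h (Fin.cons x g) - H g| ≤ 1
          have e1 : h (Fin.cons x g) - H g
              = (∑ y : κ, (h (Fin.cons x g) - h (Fin.cons y g))) / c := by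
            rw [hHdef g, Finset.sum_sub_distrib, Finset.sum_const, Finset.card_univ,
              nsmul_eq_mul, ← hc]
            field_simp
          rw [e1, abs_div, abs_of_pos hc0, div_le_one hc0]
          calc |∑ y : κ, (h (Fin.cons x g) - h (Fin.cons y g))|
              ≤ ∑ y : κ, |h (Fin.cons x g) - h (Fin.cons y g)| := Finset.abs_sum_le_sum_abs _ _
            _ ≤ ∑ _y : κ, (1:ℝ) := by
                apply Finset.sum_le_sum
                intro y _
                apply bd 0
                intro j hj
                rcases Fin.eq_zero_or_eq_succ j with h0 | ⟨k, rfl⟩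
                · exact absurd h0 hj
                · simp
            _ = c := by simp [hc]
      have bdH : ∀ (i : Fin m) (g g' : Fin m → κ),
          (∀ j, j ≠ i → g j = g' j) → |H g - H g'| ≤ 1 := by
        intro i g g' hgg
        have e1 : H g - H g' = (∑ x : κ, (h (Fin.cons x g) - h (Fin.cons x g'))) / c := by
          rw [hHdef g, hHdef g', Finset.sum_sub_distrib]
          ring
        rw [e1, abs_div, abs_of_pos hc0, div_le_one hc0]
        calc |∑ x : κ, (h (Fin.cons x g) - h (Fin.cons x g'))|
            ≤ ∑ x : κ, |h (Fin.cons x g) - h (Fin.cons x g')| := Finset.abs_sum_le_sum_abs _ _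
          _ ≤ ∑ _x : κ, (1:ℝ) := by
              apply Finset.sum_le_sum
              intro x _
              apply bd i.succ
              intro j hj
              rcases Fin.eq_zero_or_eq_succ j with rfl | ⟨k, rfl⟩
              · simp
              · have hk : k ≠ i := fun hki => hj (by rw [hki])
                simp [hgg k hk]
          _ = c := by simp [hc]
      have main : ∑ f, Real.exp (t * (h f - (∑ g, h g) / (Fintype.card (Fin (m+1) → κ) : ℝ)))
          ≤ c * Real.exp (t^2/2) * ∑ g, Real.exp (t * (H g - μ)) := by
        rw [hmean, hdec (fun f => Real.exp (t * (h f - μ))), Finset.mul_sum]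
        apply Finset.sum_le_sum
        intro g _
        calc ∑ x : κ, Real.exp (t * (h (Fin.cons x g) - μ))
            = (∑ x : κ, Real.exp (t * (h (Fin.cons x g) - H g))) * Real.exp (t * (H g - μ)) := by
              rw [Finset.sum_mul]
              refine Finset.sum_congr rfl fun x _ => ?_
              rw [← Real.exp_add]
              congr 1
              ring
          _ ≤ c * Real.exp (t^2/2) * Real.exp (t * (H g - μ)) :=
              mul_le_mul_of_nonneg_right (inner g) (Real.exp_pos _).le
      have ihH := ih H bdH
      rw [← hμ, div_le_iff₀ hcm0] at ihH
      rw [div_le_iff₀ (by rw [hcard]; positivity :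
        (0:ℝ) < (Fintype.card (Fin (m+1) → κ) : ℝ))]
      have expadd : Real.exp (t^2/2) * Real.exp (t ^ 2 * m / 2)
          = Real.exp (t ^ 2 * ((m:ℝ)+1) / 2) := by
        rw [← Real.exp_add]; ring_nf
      push_cast
      calc ∑ f, Real.exp (t * (h f - (∑ g, h g) / (Fintype.card (Fin (m+1) → κ) : ℝ)))
          ≤ c * Real.exp (t^2/2) * ∑ g, Real.exp (t * (H g - μ)) := main
        _ ≤ c * Real.exp (t^2/2) * (Real.exp (t ^ 2 * m / 2) * (Fintype.card (Fin m → κ) : ℝ)) :=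
            mul_le_mul_of_nonneg_left ihH (by positivity)
        _ = Real.exp (t ^ 2 * ((m:ℝ)+1) / 2) * (c * (Fintype.card (Fin m → κ) : ℝ)) := by
            rw [← expadd]; ring
        _ = Real.exp (t ^ 2 * ((m:ℝ)+1) / 2) * (Fintype.card (Fin (m+1) → κ) : ℝ) := by
            rw [hcard]
lemma mcdiarmid_tail (m : ℕ) {κ : Type} [Fintype κ] [Nonempty κ] (h : (Fin m → κ) → ℝ)
    (bd : ∀ (i : Fin m) (f g : Fin m → κ), (∀ j, j ≠ i → f j = g j) → |h f - h g| ≤ 1)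
    (ε : ℝ) (hε : 0 < ε) :
    ((univ.filter (fun f : Fin m → κ =>
        (∑ g, h g) / (Fintype.card (Fin m → κ) : ℝ) + ε * m ≤ h f)).card : ℝ)
      / (Fintype.card (Fin m → κ) : ℝ) ≤ Real.exp (-ε ^ 2 * m / 2) := by
  set N : ℝ := (Fintype.card (Fin m → κ) : ℝ) with hN
  have hN0 : (0:ℝ) < N := by rw [hN]; exact_mod_cast Fintype.card_pos
  set μ : ℝ := (∑ g, h g) / N with hμ
  have key : ((univ.filter (fun f : Fin m → κ => μ + ε * m ≤ h f)).card : ℝ)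
      ≤ Real.exp (-ε^2 * m) * ∑ f, Real.exp (ε * (h f - μ)) := by
    rw [Finset.mul_sum]
    calc ((univ.filter (fun f : Fin m → κ => μ + ε * m ≤ h f)).card : ℝ)
        = ∑ _f ∈ univ.filter (fun f : Fin m → κ => μ + ε * m ≤ h f), (1:ℝ) := by
          rw [Finset.sum_const, nsmul_eq_mul, mul_one]
      _ ≤ ∑ f ∈ univ.filter (fun f : Fin m → κ => μ + ε * m ≤ h f),
            Real.exp (-ε^2 * m) * Real.exp (ε * (h f - μ)) := by
          apply Finset.sum_le_sum
          intro f hf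
          rw [Finset.mem_filter] at hf
          rw [← Real.exp_add]
          have : (0:ℝ) ≤ -ε^2 * m + ε * (h f - μ) := by
            have := hf.2
            nlinarith [hε.le]
          calc (1:ℝ) = Real.exp 0 := (Real.exp_zero).symm
            _ ≤ _ := Real.exp_le_exp.mpr this
      _ ≤ ∑ f, Real.exp (-ε^2 * m) * Real.exp (ε * (h f - μ)) := by
          apply Finset.sum_le_sum_of_subset_of_nonneg (Finset.filter_subset _ _)
          intro f _ _
          positivity
  have mgf := mcdiarmid_mgf m h ε bd
  rw [← hN, ← hμ, div_le_iff₀ hN0] at mgf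
  rw [div_le_iff₀ hN0]
  calc ((univ.filter (fun f : Fin m → κ => μ + ε * m ≤ h f)).card : ℝ)
      ≤ Real.exp (-ε^2 * m) * ∑ f, Real.exp (ε * (h f - μ)) := key
    _ ≤ Real.exp (-ε^2 * m) * (Real.exp (ε ^ 2 * m / 2) * N) :=
        mul_le_mul_of_nonneg_left mgf (Real.exp_pos _).le
    _ = Real.exp (-ε ^ 2 * m / 2) * N := by
        rw [← mul_assoc, ← Real.exp_add]
        ring_nf
lemma count_avoid (n : ℕ) (b : Fin n) :
    (univ.filter (fun f : Fin n → Fin n => ¬∃ j, f j = b)).card = (n - 1) ^ n := by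
  have : univ.filter (fun f : Fin n → Fin n => ¬∃ j, f j = b)
      = Fintype.piFinset (fun _ : Fin n => univ.erase b) := by
    ext f
    simp [Fintype.mem_piFinset, not_exists]
  rw [this, Fintype.card_piFinset]
  simp [Finset.card_erase_of_mem]

lemma count_hit (n : ℕ) (b : Fin n) :
    (univ.filter (fun f : Fin n → Fin n => ∃ j, f j = b)).card = n ^ n - (n - 1) ^ n := by
  have key := Finset.card_filter_add_card_filter_not
    (s := (univ : Finset (Fin n → Fin n))) (p := fun f => ∃ j, f j = b)
  rw [count_avoid] at key
  have hcard : (univ : Finset (Fin n → Fin n)).card = n ^ n := by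
    rw [Finset.card_univ]
    simp [Fintype.card_fun]
  rw [hcard] at key
  exact Nat.eq_sub_of_add_eq key

lemma mean_S (n : ℕ) (B : Finset (Fin n)) :
    ∑ f : Fin n → Fin n, ((B.filter (fun b => ∃ j, f j = b)).card : ℝ)
      = (B.card : ℝ) * (((n ^ n : ℕ) : ℝ) - (((n-1) ^ n : ℕ) : ℝ)) := by
  have swap : ∑ f : Fin n → Fin n, ((B.filter (fun b => ∃ j, f j = b)).card : ℝ)
      = ∑ b ∈ B, ((univ.filter (fun f : Fin n → Fin n => ∃ j, f j = b)).card : ℝ) := by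
    simp_rw [Finset.card_filter]
    push_cast
    rw [Finset.sum_comm]
  rw [swap]
  have hle : (n-1)^n ≤ n^n := Nat.pow_le_pow_left (Nat.sub_le n 1) n
  calc ∑ b ∈ B, ((univ.filter (fun f : Fin n → Fin n => ∃ j, f j = b)).card : ℝ)
      = ∑ _b ∈ B, ((n ^ n - (n-1)^n : ℕ) : ℝ) := by
        refine Finset.sum_congr rfl fun b _ => ?_
        rw [count_hit]
    _ = (B.card : ℝ) * (((n ^ n : ℕ) : ℝ) - (((n-1) ^ n : ℕ) : ℝ)) := by
        rw [Finset.sum_const, nsmul_eq_mul, Nat.cast_sub hle]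
lemma ratio_le_inv_e (n : ℕ) (hn : 1 ≤ n) :
    (((n-1)^n : ℕ) : ℝ) / ((n:ℝ)^n) ≤ 1 / Real.exp 1 := by
  have hs0 : (0:ℝ) < (n:ℝ) := by exact_mod_cast hn
  have hr : (((n-1 : ℕ)) : ℝ) = (n:ℝ) - 1 := by
    push_cast [Nat.cast_sub hn]; ring
  have hr0 : (0:ℝ) ≤ (n:ℝ) - 1 := by
    have : (1:ℝ) ≤ (n:ℝ) := by exact_mod_cast hn
    linarith
  have h1 : (n:ℝ) - 1 ≤ (n:ℝ) * Real.exp (-1/(n:ℝ)) := by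
    have h := mul_le_mul_of_nonneg_left (Real.add_one_le_exp (-1/(n:ℝ))) hs0.le
    have e : (n:ℝ) * (-1/(n:ℝ) + 1) = (n:ℝ) - 1 := by field_simp; ring
    linarith
  have h2 : ((n:ℝ) - 1)^n ≤ ((n:ℝ) * Real.exp (-1/(n:ℝ)))^n :=
    pow_le_pow_left₀ hr0 h1 n
  have h3 : ((n:ℝ) * Real.exp (-1/(n:ℝ)))^n = (n:ℝ)^n * Real.exp (-1) := by
    rw [mul_pow, ← Real.exp_nat_mul]
    congr 2
    field_simp
  rw [div_le_div_iff₀ (by positivity) (Real.exp_pos 1)]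
  push_cast [hr]
  calc ((n:ℝ) - 1)^n * Real.exp 1 ≤ ((n:ℝ) * Real.exp (-1/(n:ℝ)))^n * Real.exp 1 :=
        mul_le_mul_of_nonneg_right h2 (Real.exp_pos 1).le
    _ = (n:ℝ)^n * (Real.exp (-1) * Real.exp 1) := by rw [h3]; ring
    _ = 1 * (n:ℝ)^n := by rw [← Real.exp_add]; norm_num

lemma inv_e_sub_le_ratio (n : ℕ) (hn : 1 ≤ n) :
    1 / Real.exp 1 - 1 / (Real.exp 1 * n) ≤ (((n-1)^n : ℕ) : ℝ) / ((n:ℝ)^n) := by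
  obtain ⟨m, rfl⟩ : ∃ m, n = m + 1 := ⟨n-1, (Nat.succ_pred_eq_of_pos hn).symm⟩
  have hm : m + 1 - 1 = m := by omega
  rw [hm]
  set s : ℝ := ((m:ℝ) + 1) with hs
  have hs0 : (0:ℝ) < s := by positivity
  have hscast : ((m+1 : ℕ):ℝ) = s := by push_cast; rfl
  have key : s^m ≤ Real.exp 1 * (m:ℝ)^m := by
    rcases Nat.eq_zero_or_pos m with rfl | hm1
    · simpa using Real.one_le_exp_iff.mpr zero_le_one
    · have hr0 : (0:ℝ) < (m:ℝ) := by exact_mod_cast hm1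
      have hle : s ≤ (m:ℝ) * Real.exp (1/(m:ℝ)) := by
        have h := mul_le_mul_of_nonneg_left (Real.add_one_le_exp (1/(m:ℝ))) hr0.le
        have e : (m:ℝ) * (1/(m:ℝ) + 1) = s := by field_simp [hs]; ring
        linarith
      calc s^m ≤ ((m:ℝ) * Real.exp (1/(m:ℝ)))^m := pow_le_pow_left₀ hs0.le hle m
        _ = (m:ℝ)^m * Real.exp ((m:ℕ) * (1/(m:ℝ))) := by rw [mul_pow, ← Real.exp_nat_mul]
        _ = (m:ℝ)^m * Real.exp 1 := by
            congr 2
            field_simp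
        _ = Real.exp 1 * (m:ℝ)^m := mul_comm _ _
  have e1 : 1 / Real.exp 1 - 1 / (Real.exp 1 * ((m+1:ℕ):ℝ)) = (m:ℝ) / (Real.exp 1 * s) := by
    rw [hscast]
    field_simp
    rw [hs]; ring
  rw [e1]
  push_cast
  rw [div_le_div_iff₀ (by positivity) (by positivity)]
  calc (m:ℝ) * ((m:ℝ)+1)^(m+1) = (m:ℝ) * (s * s^m) := by rw [hs]; ring
    _ ≤ (m:ℝ) * (s * (Real.exp 1 * (m:ℝ)^m)) := by
        apply mul_le_mul_of_nonneg_left _ (Nat.cast_nonneg m)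
        exact mul_le_mul_of_nonneg_left key hs0.le
    _ = (m:ℝ)^(m+1) * (Real.exp 1 * s) := by ring
    _ = (m:ℝ)^(m+1) * (Real.exp 1 * ((m:ℝ)+1)) := by rw [hs]

lemma bd_S (n : ℕ) (B : Finset (Fin n)) (i : Fin n) (f g : Fin n → Fin n)
    (hfg : ∀ j, j ≠ i → f j = g j) :
    |((B.filter (fun b => ∃ j, f j = b)).card : ℝ)
      - ((B.filter (fun b => ∃ j, g j = b)).card : ℝ)| ≤ 1 := by
  have sub : ∀ (u v : Fin n → Fin n), (∀ j, j ≠ i → u j = v j) →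
      (B.filter (fun b => ∃ j, u j = b)) ⊆ insert (u i) (B.filter (fun b => ∃ j, v j = b)) := by
    intro u v huv b hb
    rw [Finset.mem_filter] at hb
    obtain ⟨hbB, j, hj⟩ := hb
    by_cases hji : j = i
    · subst hji
      exact Finset.mem_insert.mpr (Or.inl hj.symm)
    · refine Finset.mem_insert_of_mem (Finset.mem_filter.mpr ⟨hbB, j, ?_⟩)
      rw [← huv j hji]
      exact hj
  have c1 : (B.filter (fun b => ∃ j, f j = b)).card
      ≤ (B.filter (fun b => ∃ j, g j = b)).card + 1 :=
    le_trans (Finset.card_le_card (sub f g hfg)) (Finset.card_insert_le _ _)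
  have c2 : (B.filter (fun b => ∃ j, g j = b)).card
      ≤ (B.filter (fun b => ∃ j, f j = b)).card + 1 :=
    le_trans (Finset.card_le_card (sub g f (fun j hj => (hfg j hj).symm)))
      (Finset.card_insert_le _ _)
  rw [abs_sub_le_iff]
  constructor
  · have : ((B.filter (fun b => ∃ j, f j = b)).card : ℝ)
        ≤ ((B.filter (fun b => ∃ j, g j = b)).card : ℝ) + 1 := by exact_mod_cast c1
    linarith
  · have : ((B.filter (fun b => ∃ j, g j = b)).card : ℝ)
        ≤ ((B.filter (fun b => ∃ j, f j = b)).card : ℝ) + 1 := by exact_mod_cast c2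
    linarith

/-- Balls in bins: `n` balls thrown i.i.d. uniformly into `n` bins,
i.e. `f : Fin n → Fin n` is a uniformly random function.  For a subset `B` of
the bins and `S` the number of bins of `B` receiving at least one ball, for
every `ε > 0`, with probability at least `1 − 2·e^{−ε²n/2}` we have
`|B|·(1 − 1/e) − εn ≤ S ≤ |B|·(1 − 1/e + 1/(e·n)) + εn`. -/
theorem balls_in_bins_concentration (n : ℕ) (hn : 1 ≤ n) (B : Finset (Fin n))
    (ε : ℝ) (hε : 0 < ε) :
    1 - 2 * Real.exp (-ε ^ 2 * n / 2) ≤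
      ((Finset.univ.filter (fun f : Fin n → Fin n =>
          (B.card : ℝ) * (1 - 1 / Real.exp 1) - ε * n
              ≤ ((B.filter (fun b => ∃ j, f j = b)).card : ℝ)
            ∧ ((B.filter (fun b => ∃ j, f j = b)).card : ℝ)
              ≤ (B.card : ℝ) * (1 - 1 / Real.exp 1 + 1 / (Real.exp 1 * n)) + ε * n)).card : ℝ)
        / (n : ℝ) ^ n := by
  haveI : Nonempty (Fin n) := ⟨⟨0, hn⟩⟩
  set hS : (Fin n → Fin n) → ℝ := fun f => ((B.filter (fun b => ∃ j, f j = b)).card : ℝ)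
    with hSdef
  have bd : ∀ (i : Fin n) (f g : Fin n → Fin n), (∀ j, j ≠ i → f j = g j)
      → |hS f - hS g| ≤ 1 := fun i f g hfg => bd_S n B i f g hfg
  have bd' : ∀ (i : Fin n) (f g : Fin n → Fin n), (∀ j, j ≠ i → f j = g j)
      → |(fun f => -hS f) f - (fun f => -hS f) g| ≤ 1 := by
    intro i f g hfg
    simp only [neg_sub_neg]
    rw [abs_sub_comm]
    exact bd i f g hfg
  set N : ℝ := (Fintype.card (Fin n → Fin n) : ℝ) with hN
  have hN0 : (0:ℝ) < N := by rw [hN]; exact_mod_cast Fintype.card_pos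
  have hNval : N = (n : ℝ) ^ n := by
    rw [hN, Fintype.card_fun, Fintype.card_fin]
    push_cast
    ring
  set μ : ℝ := (∑ g, hS g) / N with hμ
  -- mean bounds
  have hq1 := ratio_le_inv_e n hn
  have hq2 := inv_e_sub_le_ratio n hn
  set q : ℝ := (((n-1)^n : ℕ) : ℝ) / ((n:ℝ)^n) with hq
  have hsn0 : (0:ℝ) < (n:ℝ)^n := by
    have : (0:ℝ) < (n:ℝ) := by exact_mod_cast hn
    positivity
  have hμq : μ = (B.card : ℝ) * (1 - q) := by
    rw [hμ, hSdef, mean_S n B, hNval, hq]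
    push_cast
    field_simp
  have hμlow : (B.card : ℝ) * (1 - 1 / Real.exp 1) ≤ μ := by
    rw [hμq]
    apply mul_le_mul_of_nonneg_left _ (Nat.cast_nonneg _)
    linarith
  have hμhigh : μ ≤ (B.card : ℝ) * (1 - 1 / Real.exp 1 + 1 / (Real.exp 1 * n)) := by
    rw [hμq]
    apply mul_le_mul_of_nonneg_left _ (Nat.cast_nonneg _)
    linarith
  -- tails
  have tail1 := mcdiarmid_tail n hS bd ε hε
  have tail2 := mcdiarmid_tail n (fun f => -hS f) bd' ε hε
  rw [← hN, ← hμ] at tail1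
  rw [← hN] at tail2
  have hsumneg : (∑ g : Fin n → Fin n, (fun f => -hS f) g) / N = -μ := by
    rw [hμ]
    simp only []
    rw [Finset.sum_neg_distrib, neg_div]
  rw [hsumneg] at tail2
  set bad1 := univ.filter (fun f : Fin n → Fin n => μ + ε * n ≤ hS f) with hbad1
  set bad2 := univ.filter (fun f : Fin n → Fin n => -μ + ε * n ≤ -hS f) with hbad2
  set Good := Finset.univ.filter (fun f : Fin n → Fin n =>
          (B.card : ℝ) * (1 - 1 / Real.exp 1) - ε * n ≤ hS f
            ∧ hS f ≤ (B.card : ℝ) * (1 - 1 / Real.exp 1 + 1 / (Real.exp 1 * n)) + ε * n)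
    with hGood
  have cover : (univ : Finset (Fin n → Fin n)) ⊆ Good ∪ bad1 ∪ bad2 := by
    intro f _
    by_cases h1 : f ∈ bad1
    · exact Finset.mem_union_left _ (Finset.mem_union_right _ h1)
    by_cases h2 : f ∈ bad2
    · exact Finset.mem_union_right _ h2
    apply Finset.mem_union_left
    apply Finset.mem_union_left
    rw [hbad1, Finset.mem_filter] at h1
    rw [hbad2, Finset.mem_filter] at h2
    push_neg at h1 h2
    have hu1 : hS f < μ + ε * n := h1 (Finset.mem_univ f)
    have hu2 : -hS f < -μ + ε * n := h2 (Finset.mem_univ f)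
    rw [hGood, Finset.mem_filter]
    exact ⟨Finset.mem_univ f, by linarith, by linarith⟩
  have cardsum : (Fintype.card (Fin n → Fin n) : ℝ) ≤
      (Good.card : ℝ) + (bad1.card : ℝ) + (bad2.card : ℝ) := by
    have hnat : Fintype.card (Fin n → Fin n) ≤ Good.card + bad1.card + bad2.card := by
      calc Fintype.card (Fin n → Fin n) = (univ : Finset (Fin n → Fin n)).card :=
            (Finset.card_univ).symm
        _ ≤ (Good ∪ bad1 ∪ bad2).card := Finset.card_le_card cover
        _ ≤ (Good ∪ bad1).card + bad2.card := Finset.card_union_le _ _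
        _ ≤ Good.card + bad1.card + bad2.card := by
            have := Finset.card_union_le Good bad1
            omega
    exact_mod_cast hnat
  rw [← hN] at cardsum
  rw [show ((n:ℝ)^n) = N from hNval.symm, le_div_iff₀ hN0]
  rw [div_le_iff₀ hN0] at tail1 tail2
  nlinarith [tail1, tail2, cardsum, hN0]
end

section
/- Let n balls be thrown i.i.d. uniformly into n bins, and let B₁, …, B_ℓ be ordered sequences of bins, each consisting of c ≥ 1 pairwise distinct bins, such that no bin belongs to more than d of the sequences, and fix R ⊆ {1,…,c}. Assume c² < n. Let S be the number of satisfied bin sequences. Then for every ε > 0, with probability at least 1 − 2·e^{−ε²n/2}, S ≥ ℓ·(1 − 2^{|R|}/e^c) − ε·d·n − (2^{|R|}·c²/e^c)·ℓ/(n − c²). -/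
attribute [local instance] Classical.propDecidable

set_option maxHeartbeats 1000000

open Finset

/-- An ordered sequence of bins `b : Fin c → Fin n` is *satisfied* by the ball
placement `f : Fin n → Fin n` (with respect to `R ⊆ {1,…,c}`) if some bin
`b i` with `i ∉ R` receives at least one ball, or some bin `b i` with `i ∈ R`
receives at least two balls. -/
def BinSeqSatisfied (n c : ℕ) (b : Fin c → Fin n) (R : Finset (Fin c))
    (f : Fin n → Fin n) : Prop :=
  (∃ i ∉ R, ∃ j, f j = b i) ∨
    (∃ i ∈ R, 2 ≤ (Finset.univ.filter (fun j => f j = b i)).card)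


/-- One-step Hoeffding: centered bounded variables have small exponential sums. -/
lemma one_step_mgf {n : ℕ} (hn : 0 < n) (Y : Fin n → ℝ) (c lam : ℝ)
    (hsum : ∑ v, Y v = 0) (hb : ∀ v, |Y v| ≤ c) :
    ∑ v, Real.exp (lam * Y v) ≤ n * Real.exp (lam ^ 2 * c ^ 2 / 2) := by
  have hc0 : 0 ≤ c := le_trans (abs_nonneg _) (hb ⟨0, hn⟩)
  have hnR : (0:ℝ) < n := by exact_mod_cast hn
  rcases eq_or_lt_of_le hc0 with h0 | hcpos
  · have hY : ∀ v, Y v = 0 := fun v => abs_eq_zero.mp (le_antisymm (h0 ▸ hb v) (abs_nonneg _))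
    have he : ∑ v : Fin n, Real.exp (lam * Y v) = n := by simp [hY]
    rw [he]
    have h1 : (1:ℝ) ≤ Real.exp (lam ^ 2 * c ^ 2 / 2) := by
      rw [← Real.exp_zero]
      exact Real.exp_le_exp.mpr (by positivity)
    nlinarith
  · have key : ∀ v, Real.exp (lam * Y v) ≤
        (c - Y v) / (2 * c) * Real.exp (-(lam * c)) + (c + Y v) / (2 * c) * Real.exp (lam * c) := by
      intro v
      have h1 := abs_le.mp (hb v)
      have ha : (0:ℝ) ≤ (c - Y v) / (2 * c) := div_nonneg (by linarith [h1.2]) (by linarith)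
      have hb' : (0:ℝ) ≤ (c + Y v) / (2 * c) := div_nonneg (by linarith [h1.1]) (by linarith)
      have hab : (c - Y v) / (2 * c) + (c + Y v) / (2 * c) = 1 := by field_simp; ring
      have hcx := convexOn_exp.2 (Set.mem_univ (-(lam * c))) (Set.mem_univ (lam * c)) ha hb' hab
      simp only [smul_eq_mul] at hcx
      have harg : (c - Y v) / (2 * c) * -(lam * c) + (c + Y v) / (2 * c) * (lam * c) = lam * Y v := by
        field_simp; ring
      rwa [harg] at hcx
    calc ∑ v, Real.exp (lam * Y v)
        ≤ ∑ v, ((c - Y v) / (2 * c) * Real.exp (-(lam * c)) + (c + Y v) / (2 * c) * Real.exp (lam * c)) :=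
          Finset.sum_le_sum fun v _ => key v
      _ = n * ((Real.exp (-(lam * c)) + Real.exp (lam * c)) / 2) := by
          rw [Finset.sum_add_distrib, ← Finset.sum_mul, ← Finset.sum_mul]
          have e1 : ∑ v : Fin n, (c - Y v) / (2 * c) = n / 2 := by
            rw [← Finset.sum_div, Finset.sum_sub_distrib, hsum]
            simp only [Finset.sum_const, Finset.card_univ, Fintype.card_fin, nsmul_eq_mul, sub_zero]
            field_simp
          have e2 : ∑ v : Fin n, (c + Y v) / (2 * c) = n / 2 := by
            rw [← Finset.sum_div, Finset.sum_add_distrib, hsum]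
            simp only [Finset.sum_const, Finset.card_univ, Fintype.card_fin, nsmul_eq_mul, add_zero]
            field_simp
          rw [e1, e2]; ring
      _ ≤ n * Real.exp (lam ^ 2 * c ^ 2 / 2) := by
          have hch : (Real.exp (-(lam * c)) + Real.exp (lam * c)) / 2 = Real.cosh (lam * c) := by
            rw [Real.cosh_eq]; ring_nf
          rw [hch]
          have h2 := Real.cosh_le_exp_half_sq (lam * c)
          have h3 : (lam * c) ^ 2 / 2 = lam ^ 2 * c ^ 2 / 2 := by ring
          rw [h3] at h2
          exact mul_le_mul_of_nonneg_left h2 (by positivity)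

lemma mgf_bound (n : ℕ) (hn : 0 < n) (c : ℝ) :
    ∀ (m : ℕ) (g : (Fin m → Fin n) → ℝ),
    (∀ (f : Fin m → Fin n) (j : Fin m) (v : Fin n), |g f - g (Function.update f j v)| ≤ c) →
    ∀ lam : ℝ,
    ∑ f : Fin m → Fin n, Real.exp (lam * (g f - (∑ f' : Fin m → Fin n, g f') / (n:ℝ) ^ m)) ≤
      (n:ℝ) ^ m * Real.exp (lam ^ 2 * c ^ 2 * m / 2) := by
  have hN0 : (0:ℝ) < (n:ℝ) := by exact_mod_cast hn
  intro m
  induction m with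
  | zero =>
    intro g _ lam
    have hu : ∀ f : Fin 0 → Fin n, f = (fun i => i.elim0) := fun f => funext fun i => i.elim0
    rw [Fintype.sum_eq_single (fun i : Fin 0 => i.elim0) (fun f hf => absurd (hu f) hf),
        Fintype.sum_eq_single (fun i : Fin 0 => i.elim0) (fun f hf => absurd (hu f) hf)]
    simp
  | succ m ih =>
    intro g hbd lam
    push_cast
    have hh : ∀ y : Fin m → Fin n, True := fun _ => trivial
    set h : (Fin m → Fin n) → ℝ := fun y => (∑ v, g (Fin.cons v y)) / (n:ℝ) with hhdef
    have reindex : ∀ (F : (Fin (m+1) → Fin n) → ℝ),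
        ∑ f : Fin (m+1) → Fin n, F f = ∑ y : Fin m → Fin n, ∑ v : Fin n, F (Fin.cons v y) := by
      intro F
      rw [← (Fin.consEquiv (fun _ : Fin (m+1) => Fin n)).sum_comp F, Fintype.sum_prod_type,
        Finset.sum_comm]
      rfl
    have hmean : (∑ y : Fin m → Fin n, h y) / (n:ℝ) ^ m
        = (∑ f : Fin (m+1) → Fin n, g f) / (n:ℝ) ^ (m+1) := by
      rw [reindex g]
      simp only [hhdef]
      rw [← Finset.sum_div, div_div]
      ring_nf
    have hbdh : ∀ (y : Fin m → Fin n) (j : Fin m) (v : Fin n),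
        |h y - h (Function.update y j v)| ≤ c := by
      intro y j v
      have e : h y - h (Function.update y j v)
          = (∑ w : Fin n, (g (Fin.cons w y) - g (Fin.cons w (Function.update y j v)))) / (n:ℝ) := by
        simp only [hhdef]
        rw [← sub_div, ← Finset.sum_sub_distrib]
      rw [e, abs_div, abs_of_pos hN0, div_le_iff₀ hN0]
      calc |∑ w : Fin n, (g (Fin.cons w y) - g (Fin.cons w (Function.update y j v)))|
          ≤ ∑ w : Fin n, |g (Fin.cons w y) - g (Fin.cons w (Function.update y j v))| :=
            Finset.abs_sum_le_sum_abs _ _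
        _ ≤ ∑ _w : Fin n, c := by
            apply Finset.sum_le_sum
            intro w _
            rw [Fin.cons_update]
            exact hbd (Fin.cons w y) j.succ v
        _ = c * n := by simp [mul_comm]
    have hY : ∀ (y : Fin m → Fin n) (v : Fin n), |g (Fin.cons v y) - h y| ≤ c := by
      intro y v
      have e : g (Fin.cons v y) - h y
          = (∑ w : Fin n, (g (Fin.cons v y) - g (Fin.cons w y))) / (n:ℝ) := by
        rw [Finset.sum_sub_distrib, Finset.sum_const, Finset.card_univ, Fintype.card_fin,
          nsmul_eq_mul, sub_div, hhdef]
        field_simp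
      rw [e, abs_div, abs_of_pos hN0, div_le_iff₀ hN0]
      calc |∑ w : Fin n, (g (Fin.cons v y) - g (Fin.cons w y))|
          ≤ ∑ w : Fin n, |g (Fin.cons v y) - g (Fin.cons w y)| := Finset.abs_sum_le_sum_abs _ _
        _ ≤ ∑ _w : Fin n, c := by
            apply Finset.sum_le_sum
            intro w _
            have e2 : g (Fin.cons w y) = g (Function.update (Fin.cons v y) 0 w) := by
              rw [Fin.update_cons_zero]
            rw [e2]
            exact hbd (Fin.cons v y) 0 w
        _ = c * n := by simp [mul_comm]
    have hsum0 : ∀ y : Fin m → Fin n, ∑ v : Fin n, (g (Fin.cons v y) - h y) = 0 := by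
      intro y
      rw [Finset.sum_sub_distrib, Finset.sum_const, Finset.card_univ, Fintype.card_fin,
        nsmul_eq_mul, hhdef]
      field_simp
      ring
    set μ : ℝ := (∑ f : Fin (m+1) → Fin n, g f) / (n:ℝ) ^ (m+1) with hμ
    calc ∑ f : Fin (m+1) → Fin n, Real.exp (lam * (g f - μ))
        = ∑ y : Fin m → Fin n, ∑ v : Fin n,
            Real.exp (lam * (g (Fin.cons v y) - h y)) * Real.exp (lam * (h y - μ)) := by
          rw [reindex (fun f => Real.exp (lam * (g f - μ)))]
          refine Finset.sum_congr rfl fun y _ => Finset.sum_congr rfl fun v _ => ?_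
          rw [← Real.exp_add]; ring_nf
      _ ≤ ∑ y : Fin m → Fin n, ((n:ℝ) * Real.exp (lam ^ 2 * c ^ 2 / 2)) * Real.exp (lam * (h y - μ)) := by
          refine Finset.sum_le_sum fun y _ => ?_
          rw [← Finset.sum_mul]
          exact mul_le_mul_of_nonneg_right
            (one_step_mgf hn _ c lam (hsum0 y) (hY y)) (Real.exp_nonneg _)
      _ = ((n:ℝ) * Real.exp (lam ^ 2 * c ^ 2 / 2)) *
            ∑ y : Fin m → Fin n, Real.exp (lam * (h y - (∑ y' : Fin m → Fin n, h y') / (n:ℝ) ^ m)) := by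
          rw [← Finset.mul_sum, hmean]
      _ ≤ ((n:ℝ) * Real.exp (lam ^ 2 * c ^ 2 / 2)) * ((n:ℝ) ^ m * Real.exp (lam ^ 2 * c ^ 2 * m / 2)) := by
          refine mul_le_mul_of_nonneg_left (ih h hbdh lam) (by positivity)
      _ = (n:ℝ) ^ (m+1) * Real.exp (lam ^ 2 * c ^ 2 * (m+1) / 2) := by
          have he : Real.exp (lam ^ 2 * c ^ 2 / 2) * Real.exp (lam ^ 2 * c ^ 2 * m / 2)
              = Real.exp (lam ^ 2 * c ^ 2 * ((m:ℝ)+1) / 2) := by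
            rw [← Real.exp_add]; ring_nf
          rw [← he, pow_succ]
          ring



lemma unsat_card_le (n c : ℕ) (hcn : c ≤ n) (b : Fin c → Fin n)
    (hinj : Function.Injective b) (R : Finset (Fin c)) :
    (univ.filter (fun f : Fin n → Fin n => ¬ BinSeqSatisfied n c b R f)).card
      ≤ ∑ W ∈ R.powerset, n ^ W.card * (n - c) ^ (n - W.card) := by
  classical
  set V : Finset (Fin n) := univ.image b with hV
  have hVcard : V.card = c := by
    rw [hV, card_image_of_injective _ hinj, card_univ, Fintype.card_fin]
  set T : (W : Finset (Fin c)) → ((i : Fin c) → i ∈ W → Fin n) → Finset (Fin n → Fin n) :=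
    fun W g => Fintype.piFinset (fun j =>
      if h : ∃ i, ∃ hi : i ∈ W, g i hi = j then {b h.choose} else Vᶜ) with hT
  set GS : (W : Finset (Fin c)) → Finset ((i : Fin c) → i ∈ W → Fin n) :=
    fun W => (W.pi (fun _ => (univ : Finset (Fin n)))).filter
      (fun g => ∀ i hi i' hi', g i hi = g i' hi' → i = i') with hGS
  have hsub : univ.filter (fun f : Fin n → Fin n => ¬ BinSeqSatisfied n c b R f) ⊆
      R.powerset.biUnion (fun W => (GS W).biUnion (fun g => T W g)) := by
    intro f hf
    have hunsat : ¬ BinSeqSatisfied n c b R f := (mem_filter.mp hf).2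
    rw [BinSeqSatisfied] at hunsat
    push_neg at hunsat
    obtain ⟨h1, h2⟩ := hunsat
    set W : Finset (Fin c) := R.filter (fun i => ∃ j, f j = b i) with hW
    have hWR : W ∈ R.powerset := mem_powerset.mpr (filter_subset _ _)
    set g : (i : Fin c) → i ∈ W → Fin n :=
      fun i hi => (mem_filter.mp hi).2.choose with hg
    have hgspec : ∀ i hi, f (g i hi) = b i := fun i hi => (mem_filter.mp hi).2.choose_spec
    have hgmem : g ∈ GS W := by
      rw [hGS, mem_filter]
      refine ⟨mem_pi.mpr fun _ _ => mem_univ _, ?_⟩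
      intro i hi i' hi' he
      apply hinj
      rw [← hgspec i hi, ← hgspec i' hi', he]
    refine mem_biUnion.mpr ⟨W, hWR, mem_biUnion.mpr ⟨g, hgmem, ?_⟩⟩
    rw [hT]
    refine Fintype.mem_piFinset.mpr fun j => ?_
    by_cases hex : ∃ i, ∃ hi : i ∈ W, g i hi = j
    · rw [dif_pos hex, mem_singleton]
      obtain ⟨hi0, he0⟩ := hex.choose_spec
      have hs := hgspec hex.choose hi0
      rwa [he0] at hs
    · rw [dif_neg hex, mem_compl, hV, mem_image]
      rintro ⟨i, -, hbi⟩
      by_cases hiR : i ∈ R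
      · have hiW : i ∈ W := mem_filter.mpr ⟨hiR, ⟨j, hbi.symm⟩⟩
        have hne : g i hiW ≠ j := fun he => hex ⟨i, hiW, he⟩
        have hss : ({g i hiW, j} : Finset (Fin n)) ⊆ univ.filter (fun j' => f j' = b i) := by
          intro x hx
          rcases mem_insert.mp hx with rfl | hx
          · exact mem_filter.mpr ⟨mem_univ _, hgspec i hiW⟩
          · rw [mem_singleton] at hx
            subst hx
            exact mem_filter.mpr ⟨mem_univ _, hbi.symm⟩
        have hcard := card_le_card hss
        rw [card_insert_of_notMem (by simp [hne]), card_singleton] at hcard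
        exact absurd hcard (not_le.mpr (h2 i hiR))
      · exact h1 i hiR j hbi.symm
  refine le_trans (card_le_card hsub) (le_trans card_biUnion_le (sum_le_sum fun W hW => ?_))
  refine le_trans card_biUnion_le ?_
  have hTcard : ∀ g ∈ GS W, (T W g).card ≤ (n - c) ^ (n - W.card) := by
    intro g hg
    have hginj : ∀ i hi i' hi', g i hi = g i' hi' → i = i' := (mem_filter.mp hg).2
    set img : Finset (Fin n) := W.attach.image (fun i => g i.1 i.2) with himgdef
    have hinj2 : Function.Injective (fun i : {x // x ∈ W} => g i.1 i.2) := by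
      intro ⟨i, hi⟩ ⟨i', hi'⟩ h
      exact Subtype.ext (hginj i hi i' hi' h)
    have himgcard : img.card = W.card := by
      rw [himgdef, card_image_of_injective _ hinj2, card_attach]
    have hmemimg : ∀ j, (∃ i, ∃ hi : i ∈ W, g i hi = j) ↔ j ∈ img := by
      intro j
      constructor
      · rintro ⟨i, hi, rfl⟩
        exact mem_image.mpr ⟨⟨i, hi⟩, mem_attach _ _, rfl⟩
      · intro hj
        obtain ⟨⟨i, hi⟩, -, rfl⟩ := mem_image.mp hj
        exact ⟨i, hi, rfl⟩
    rw [hT]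
    rw [Fintype.card_piFinset]
    rw [← prod_mul_prod_compl img]
    have e1 : ∀ j ∈ img,
        (if h : ∃ i, ∃ hi : i ∈ W, g i hi = j then ({b h.choose} : Finset (Fin n)) else Vᶜ).card
          = 1 := by
      intro j hj
      rw [dif_pos ((hmemimg j).mpr hj), card_singleton]
    have e2 : ∀ j ∈ imgᶜ,
        (if h : ∃ i, ∃ hi : i ∈ W, g i hi = j then ({b h.choose} : Finset (Fin n)) else Vᶜ).card
          = n - c := by
      intro j hj
      rw [dif_neg (fun hx => (mem_compl.mp hj) ((hmemimg j).mp hx)), card_compl, hVcard,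
        Fintype.card_fin]
    rw [prod_congr rfl e1, prod_congr rfl e2, prod_const_one, prod_const, one_mul,
      card_compl, Fintype.card_fin, himgcard]
  calc ∑ g ∈ GS W, (T W g).card ≤ ∑ _g ∈ GS W, (n - c) ^ (n - W.card) := sum_le_sum hTcard
    _ = (GS W).card * (n - c) ^ (n - W.card) := by rw [sum_const, smul_eq_mul]
    _ ≤ n ^ W.card * (n - c) ^ (n - W.card) := by
        apply Nat.mul_le_mul_right
        calc (GS W).card ≤ (W.pi (fun _ => (univ : Finset (Fin n)))).card := card_filter_le _ _
          _ = n ^ W.card := by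
              rw [card_pi, prod_const, card_univ, Fintype.card_fin]



lemma sat_card_diff (n ℓ c d : ℕ) (B : Fin ℓ → Fin c → Fin n)
    (hd : ∀ b : Fin n, (univ.filter (fun a : Fin ℓ => ∃ i, B a i = b)).card ≤ d)
    (R : Finset (Fin c)) (f : Fin n → Fin n) (j v : Fin n) :
    (univ.filter (fun a : Fin ℓ => BinSeqSatisfied n c (B a) R f)).card
      ≤ (univ.filter (fun a : Fin ℓ =>
          BinSeqSatisfied n c (B a) R (Function.update f j v))).card + d := by
  classical
  set f' := Function.update f j v with hf'
  have hsub : univ.filter (fun a : Fin ℓ => BinSeqSatisfied n c (B a) R f)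
      ⊆ (univ.filter (fun a : Fin ℓ => BinSeqSatisfied n c (B a) R f'))
        ∪ (univ.filter (fun a : Fin ℓ => ∃ i, B a i = f j)) := by
    intro a ha
    have hsat : BinSeqSatisfied n c (B a) R f := (mem_filter.mp ha).2
    by_cases hs' : BinSeqSatisfied n c (B a) R f'
    · exact mem_union_left _ (mem_filter.mpr ⟨mem_univ _, hs'⟩)
    · refine mem_union_right _ (mem_filter.mpr ⟨mem_univ _, ?_⟩)
      by_contra hno
      push_neg at hno
      apply hs'
      have hmono : ∀ i : Fin c, (univ.filter (fun j' => f j' = B a i)).card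
          ≤ (univ.filter (fun j' => f' j' = B a i)).card := by
        intro i
        apply card_le_card
        intro j' hj'
        have hfj' : f j' = B a i := (mem_filter.mp hj').2
        have hne : j' ≠ j := by
          rintro rfl
          exact hno i hfj'.symm
        refine mem_filter.mpr ⟨mem_univ _, ?_⟩
        rw [hf', Function.update_of_ne hne, hfj']
      rcases hsat with ⟨i, hiR, j₀, hj₀⟩ | ⟨i, hiR, h2⟩
      · have hne : j₀ ≠ j := by
          rintro rfl
          exact hno i hj₀.symm
        exact Or.inl ⟨i, hiR, j₀, by rw [hf', Function.update_of_ne hne, hj₀]⟩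
      · exact Or.inr ⟨i, hiR, le_trans h2 (hmono i)⟩
  calc (univ.filter (fun a : Fin ℓ => BinSeqSatisfied n c (B a) R f)).card
      ≤ ((univ.filter (fun a : Fin ℓ => BinSeqSatisfied n c (B a) R f'))
          ∪ (univ.filter (fun a : Fin ℓ => ∃ i, B a i = f j))).card := card_le_card hsub
    _ ≤ (univ.filter (fun a : Fin ℓ => BinSeqSatisfied n c (B a) R f')).card
          + (univ.filter (fun a : Fin ℓ => ∃ i, B a i = f j)).card := card_union_le _ _
    _ ≤ _ := Nat.add_le_add_left (hd (f j)) _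

lemma sat_card_bdd (n ℓ c d : ℕ) (B : Fin ℓ → Fin c → Fin n)
    (hd : ∀ b : Fin n, (univ.filter (fun a : Fin ℓ => ∃ i, B a i = b)).card ≤ d)
    (R : Finset (Fin c)) (f : Fin n → Fin n) (j v : Fin n) :
    |((univ.filter (fun a : Fin ℓ => BinSeqSatisfied n c (B a) R f)).card : ℝ)
      - ((univ.filter (fun a : Fin ℓ =>
          BinSeqSatisfied n c (B a) R (Function.update f j v))).card : ℝ)| ≤ d := by
  have h1 := sat_card_diff n ℓ c d B hd R f j v
  have h2 := sat_card_diff n ℓ c d B hd R (Function.update f j v) j (f j)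
  rw [Function.update_idem, Function.update_eq_self] at h2
  rw [abs_le]
  constructor
  · have := (Nat.cast_le (α := ℝ)).mpr h2
    push_cast at this ⊢
    linarith
  · have := (Nat.cast_le (α := ℝ)).mpr h1
    push_cast at this ⊢
    linarith


lemma chernoff_count (n m : ℕ) (hn : 0 < n) (g : (Fin m → Fin n) → ℝ) (c : ℝ)
    (hbd : ∀ (f : Fin m → Fin n) (j : Fin m) (v : Fin n), |g f - g (Function.update f j v)| ≤ c)
    (t lam : ℝ) (hlam : 0 ≤ lam) :
    ((univ.filter (fun f : Fin m → Fin n =>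
        g f < (∑ f' : Fin m → Fin n, g f') / (n:ℝ) ^ m - t)).card : ℝ)
      ≤ (n:ℝ) ^ m * Real.exp (lam ^ 2 * c ^ 2 * m / 2 - lam * t) := by
  classical
  set μ := (∑ f' : Fin m → Fin n, g f') / (n:ℝ) ^ m with hμ
  have key := mgf_bound n hn c m g hbd (-lam)
  have hsq : (-lam) ^ 2 = lam ^ 2 := by ring
  rw [hsq] at key
  set Bad := univ.filter (fun f : Fin m → Fin n => g f < μ - t) with hBad
  have h1 : (Bad.card : ℝ) * Real.exp (lam * t)
      ≤ ∑ f : Fin m → Fin n, Real.exp (-lam * (g f - μ)) := by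
    have hle : ∀ f ∈ Bad, Real.exp (lam * t) ≤ Real.exp (-lam * (g f - μ)) := by
      intro f hf
      have hflt : g f < μ - t := (mem_filter.mp hf).2
      apply Real.exp_le_exp.mpr
      nlinarith
    calc (Bad.card : ℝ) * Real.exp (lam * t) = ∑ _f ∈ Bad, Real.exp (lam * t) := by
          rw [sum_const, nsmul_eq_mul]
      _ ≤ ∑ f ∈ Bad, Real.exp (-lam * (g f - μ)) := sum_le_sum hle
      _ ≤ ∑ f : Fin m → Fin n, Real.exp (-lam * (g f - μ)) :=
          sum_le_sum_of_subset_of_nonneg (subset_univ _) (fun f _ _ => Real.exp_nonneg _)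
  have h2 : (Bad.card : ℝ) * Real.exp (lam * t)
      ≤ (n:ℝ) ^ m * Real.exp (lam ^ 2 * c ^ 2 * m / 2) := le_trans h1 key
  have hexp : (0:ℝ) < Real.exp (lam * t) := Real.exp_pos _
  rw [← le_div_iff₀ hexp] at h2
  calc (Bad.card : ℝ) ≤ (n:ℝ) ^ m * Real.exp (lam ^ 2 * c ^ 2 * m / 2) / Real.exp (lam * t) := h2
    _ = (n:ℝ) ^ m * Real.exp (lam ^ 2 * c ^ 2 * m / 2 - lam * t) := by
        rw [Real.exp_sub]; ring

lemma term_bound (n c k : ℕ) (hc : 1 ≤ c) (hcn : c ^ 2 < n) (hk : k ≤ c) :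
    (n : ℝ) ^ k * ((n - c : ℕ) : ℝ) ^ (n - k)
      ≤ (n:ℝ) ^ n * Real.exp (-(c:ℝ)) * ((n:ℝ) / ((n:ℝ) - (c:ℝ) ^ 2)) := by
  have hcc : c ≤ c ^ 2 := Nat.le_self_pow two_ne_zero c
  have hcn' : c < n := lt_of_le_of_lt hcc hcn
  have hn0 : 0 < n := Nat.lt_of_lt_of_le (Nat.succ_le_of_lt (Nat.lt_of_lt_of_le Nat.zero_lt_one hc)) hcn'.le
  have hnR : (0:ℝ) < n := by exact_mod_cast hn0
  have hcR : (0:ℝ) < c := by exact_mod_cast hc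
  have hcnR : (c:ℝ) < n := by exact_mod_cast hcn'
  have hcsq : (c:ℝ) ^ 2 < n := by exact_mod_cast hcn
  have hcast : ((n - c : ℕ) : ℝ) = (n:ℝ) - c := by
    rw [Nat.cast_sub hcn'.le]
  set x : ℝ := ((n:ℝ) - c) / n with hx
  have hx0 : 0 ≤ x := by
    rw [hx]
    apply div_nonneg (by linarith) hnR.le
  have hx1 : x ≤ 1 := by
    rw [hx, div_le_one hnR]
    linarith
  have e1 : (n:ℝ) ^ k * ((n:ℝ) - c) ^ (n - k) = (n:ℝ) ^ n * x ^ (n - k) := by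
    have hnx : (n:ℝ) - c = n * x := by
      rw [hx]; field_simp
    rw [hnx, mul_pow, ← mul_assoc, ← pow_add, Nat.add_sub_cancel' (le_trans hk hcn'.le)]
  have e2 : x ^ (n - k) ≤ x ^ (n - c) :=
    pow_le_pow_of_le_one hx0 hx1 (Nat.sub_le_sub_left hk n)
  have e3 : x ≤ Real.exp (-((c:ℝ)/n)) := by
    have h := Real.add_one_le_exp (-((c:ℝ)/n))
    have : x = -((c:ℝ)/n) + 1 := by rw [hx]; field_simp; ring
    linarith
  have e4 : x ^ (n - c) ≤ Real.exp (-((c:ℝ)/n)) ^ (n - c) :=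
    pow_le_pow_left₀ hx0 e3 _
  have e5 : Real.exp (-((c:ℝ)/n)) ^ (n - c)
      = Real.exp (-(c:ℝ)) * Real.exp ((c:ℝ)^2/n) := by
    rw [← Real.exp_nat_mul, ← Real.exp_add]
    congr 1
    rw [hcast]
    field_simp
    ring
  have hncsq : (0:ℝ) < (n:ℝ) - (c:ℝ)^2 := by linarith
  have e6 : Real.exp ((c:ℝ)^2/n) ≤ (n:ℝ) / ((n:ℝ) - (c:ℝ)^2) := by
    have h := Real.add_one_le_exp (-((c:ℝ)^2/n))
    have h2 : ((n:ℝ) - (c:ℝ)^2)/n ≤ Real.exp (-((c:ℝ)^2/n)) := by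
      have : ((n:ℝ) - (c:ℝ)^2)/n = -((c:ℝ)^2/n) + 1 := by field_simp; ring
      linarith
    have h3 : (0:ℝ) < ((n:ℝ) - (c:ℝ)^2)/n := by positivity
    have h4 := one_div_le_one_div_of_le h3 h2
    rw [Real.exp_neg, one_div, inv_inv] at h4
    calc Real.exp ((c:ℝ)^2/n) ≤ 1 / (((n:ℝ) - (c:ℝ)^2)/n) := h4
      _ = (n:ℝ) / ((n:ℝ) - (c:ℝ)^2) := by
          rw [one_div_div]
  calc (n : ℝ) ^ k * ((n - c : ℕ) : ℝ) ^ (n - k)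
      = (n:ℝ) ^ n * x ^ (n - k) := by rw [hcast, e1]
    _ ≤ (n:ℝ) ^ n * x ^ (n - c) := by
        apply mul_le_mul_of_nonneg_left e2 (by positivity)
    _ ≤ (n:ℝ) ^ n * (Real.exp (-(c:ℝ)) * Real.exp ((c:ℝ)^2/n)) := by
        rw [← e5]
        exact mul_le_mul_of_nonneg_left e4 (by positivity)
    _ ≤ (n:ℝ) ^ n * Real.exp (-(c:ℝ)) * ((n:ℝ) / ((n:ℝ) - (c:ℝ) ^ 2)) := by
        rw [mul_assoc]
        apply mul_le_mul_of_nonneg_left _ (by positivity)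
        exact mul_le_mul_of_nonneg_left e6 (Real.exp_nonneg _)

/-- Balls in bins: `n` balls thrown i.i.d. uniformly into `n` bins.  Given
bin sequences `B₁, …, B_ℓ`, each of `c ≥ 1` pairwise distinct bins with
`c² < n`, such that no bin belongs to more than `d` sequences, and
`R ⊆ {1,…,c}`, the number `S` of satisfied bin sequences satisfies, for every
`ε > 0`, with probability at least `1 − 2·e^{−ε²n/2}`,
`S ≥ ℓ·(1 − 2^{|R|}/e^c) − ε·d·n − (2^{|R|}·c²/e^c)·ℓ/(n − c²)`. -/
theorem satisfied_bin_sequences_concentration (n ℓ c d : ℕ) (hc : 1 ≤ c)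
    (hcn : c ^ 2 < n) (B : Fin ℓ → Fin c → Fin n)
    (hinj : ∀ a, Function.Injective (B a))
    (hd : ∀ b : Fin n, (Finset.univ.filter (fun a : Fin ℓ => ∃ i, B a i = b)).card ≤ d)
    (R : Finset (Fin c)) (ε : ℝ) (hε : 0 < ε) :
    1 - 2 * Real.exp (-ε ^ 2 * n / 2) ≤
      ((Finset.univ.filter (fun f : Fin n → Fin n =>
          (ℓ : ℝ) * (1 - 2 ^ R.card / Real.exp 1 ^ c) - ε * d * n
              - (2 ^ R.card * c ^ 2 / Real.exp 1 ^ c) * ℓ / ((n : ℝ) - c ^ 2)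
            ≤ ((Finset.univ.filter
                (fun a : Fin ℓ => BinSeqSatisfied n c (B a) R f)).card : ℝ))).card : ℝ)
        / (n : ℝ) ^ n := by
  classical
  have hcc : c ≤ c ^ 2 := Nat.le_self_pow two_ne_zero c
  have hcn' : c < n := lt_of_le_of_lt hcc hcn
  have hn0 : 0 < n := lt_of_le_of_lt (Nat.zero_le _) hcn'
  have hnR : (0:ℝ) < (n:ℝ) := by exact_mod_cast hn0
  have hnnR : (0:ℝ) < (n:ℝ) ^ n := by positivity
  have hncsq : (0:ℝ) < (n:ℝ) - (c:ℝ) ^ 2 := by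
    have : ((c ^ 2 : ℕ) : ℝ) < ((n:ℕ) : ℝ) := by exact_mod_cast hcn
    push_cast at this
    linarith
  have hexpc : (0:ℝ) < Real.exp 1 ^ c := by positivity
  have hec : Real.exp 1 ^ c = Real.exp (c:ℝ) := by
    rw [← Real.exp_nat_mul, mul_one]
  have hecn : Real.exp (-(c:ℝ)) = (Real.exp 1 ^ c)⁻¹ := by
    rw [hec, Real.exp_neg]
  set Tthr : ℝ := (ℓ : ℝ) * (1 - 2 ^ R.card / Real.exp 1 ^ c) - ε * d * n
      - (2 ^ R.card * (c:ℝ) ^ 2 / Real.exp 1 ^ c) * ℓ / ((n : ℝ) - (c:ℝ) ^ 2) with hT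
  set Sf : (Fin n → Fin n) → ℝ := fun f =>
    ((univ.filter (fun a : Fin ℓ => BinSeqSatisfied n c (B a) R f)).card : ℝ) with hSf
  -- the goal is about the filter of Tthr ≤ Sf f
  show 1 - 2 * Real.exp (-ε ^ 2 * n / 2)
      ≤ ((univ.filter (fun f : Fin n → Fin n => Tthr ≤ Sf f)).card : ℝ) / (n:ℝ) ^ n
  rcases Nat.eq_zero_or_pos ℓ with hℓ0 | hℓpos
  · -- trivial case: no sequences
    have hall : (univ.filter (fun f : Fin n → Fin n => Tthr ≤ Sf f)) = univ := by
      refine filter_true_of_mem fun f _ => ?_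
      have hS0 : (0:ℝ) ≤ Sf f := by positivity
      have hℓR : (ℓ:ℝ) = 0 := by exact_mod_cast hℓ0
      have hTeq : Tthr ≤ 0 := by
        rw [hT, hℓR]
        have h1 : (0:ℝ) ≤ ε * d * n := by positivity
        have h2 : (2:ℝ) ^ R.card * (c:ℝ) ^ 2 / Real.exp 1 ^ c * 0 / ((n:ℝ) - (c:ℝ)^2) = 0 := by
          ring
        rw [h2]
        linarith
      linarith
    rw [hall, card_univ, Fintype.card_fun, Fintype.card_fin]
    push_cast
    rw [div_self (ne_of_gt hnnR)]
    have := Real.exp_pos (-ε ^ 2 * n / 2)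
    linarith
  -- main case
  have hd1 : 1 ≤ d := by
    refine le_trans ?_ (hd (B ⟨0, hℓpos⟩ ⟨0, hc⟩))
    rw [Nat.succ_le_iff, card_pos]
    exact ⟨⟨0, hℓpos⟩, mem_filter.mpr ⟨mem_univ _, ⟨⟨0, hc⟩, rfl⟩⟩⟩
  have hdR : (0:ℝ) < (d:ℝ) := by exact_mod_cast hd1
  have hRc : R.card ≤ c := by
    simpa using card_le_univ R
  -- bounded differences
  have hbdS : ∀ (f : Fin n → Fin n) (j v : Fin n),
      |Sf f - Sf (Function.update f j v)| ≤ (d:ℝ) := by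
    intro f j v
    exact sat_card_bdd n ℓ c d B hd R f j v
  -- expectation lower bound
  have hswap : ∑ f : Fin n → Fin n, Sf f
      = ∑ a : Fin ℓ, ((univ.filter
          (fun f : Fin n → Fin n => BinSeqSatisfied n c (B a) R f)).card : ℝ) := by
    simp only [hSf, card_filter]
    push_cast
    rw [Finset.sum_comm]
  have hcount : ∀ a : Fin ℓ,
      ((univ.filter (fun f : Fin n → Fin n => BinSeqSatisfied n c (B a) R f)).card : ℝ)
        = (n:ℝ) ^ n - ((univ.filter
            (fun f : Fin n → Fin n => ¬ BinSeqSatisfied n c (B a) R f)).card : ℝ) := by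
    intro a
    have h := card_filter_add_card_filter_not
      (s := (univ : Finset (Fin n → Fin n))) (fun f => BinSeqSatisfied n c (B a) R f)
    rw [card_univ, Fintype.card_fun, Fintype.card_fin] at h
    have h2 := congrArg (Nat.cast : ℕ → ℝ) h
    push_cast at h2
    linarith
  have hunsat : ∀ a : Fin ℓ,
      ((univ.filter (fun f : Fin n → Fin n => ¬ BinSeqSatisfied n c (B a) R f)).card : ℝ)
        ≤ 2 ^ R.card * ((n:ℝ) ^ n * Real.exp (-(c:ℝ)) * ((n:ℝ) / ((n:ℝ) - (c:ℝ) ^ 2))) := by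
    intro a
    have h1 := unsat_card_le n c hcn'.le (B a) (hinj a) R
    have h1R := (Nat.cast_le (α := ℝ)).mpr h1
    refine le_trans h1R ?_
    push_cast
    calc ∑ W ∈ R.powerset, (n:ℝ) ^ W.card * ((n - c : ℕ) : ℝ) ^ (n - W.card)
        ≤ ∑ _W ∈ R.powerset, (n:ℝ) ^ n * Real.exp (-(c:ℝ)) * ((n:ℝ) / ((n:ℝ) - (c:ℝ) ^ 2)) := by
          refine sum_le_sum fun W hW => ?_
          exact term_bound n c W.card hc hcn
            (le_trans (card_le_card (mem_powerset.mp hW)) hRc)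
      _ = 2 ^ R.card * ((n:ℝ) ^ n * Real.exp (-(c:ℝ)) * ((n:ℝ) / ((n:ℝ) - (c:ℝ) ^ 2))) := by
          rw [sum_const, card_powerset, nsmul_eq_mul]
          push_cast
          ring
  -- mean lower bound
  have hmean : (Tthr + ε * d * n) * (n:ℝ) ^ n ≤ ∑ f : Fin n → Fin n, Sf f := by
    rw [hswap]
    have hterm : ∀ a : Fin ℓ, (Tthr + ε * d * n) * (n:ℝ) ^ n / (ℓ:ℝ)
        ≤ ((univ.filter (fun f : Fin n → Fin n => BinSeqSatisfied n c (B a) R f)).card : ℝ) := by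
      intro a
      rw [hcount a]
      have hu := hunsat a
      have hℓR : (0:ℝ) < (ℓ:ℝ) := by exact_mod_cast hℓpos
      have hTeq : (Tthr + ε * d * n) * (n:ℝ) ^ n / (ℓ:ℝ)
          = (n:ℝ) ^ n - 2 ^ R.card * ((n:ℝ) ^ n * Real.exp (-(c:ℝ)) * ((n:ℝ) / ((n:ℝ) - (c:ℝ) ^ 2))) := by
        rw [hT, hecn]
        field_simp
        ring
      rw [hTeq]
      linarith
    have hℓR : (0:ℝ) < (ℓ:ℝ) := by exact_mod_cast hℓpos
    calc (Tthr + ε * d * n) * (n:ℝ) ^ n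
        = ∑ _a : Fin ℓ, (Tthr + ε * d * n) * (n:ℝ) ^ n / (ℓ:ℝ) := by
          rw [sum_const, card_univ, Fintype.card_fin, nsmul_eq_mul]
          field_simp
      _ ≤ _ := sum_le_sum fun a _ => hterm a
  -- concentration
  have hcher := chernoff_count n n hn0 Sf (d:ℝ) hbdS (ε * d * n) (ε / (d:ℝ))
    (le_of_lt (by positivity))
  have hexpeq : (ε / (d:ℝ)) ^ 2 * (d:ℝ) ^ 2 * (n:ℕ) / 2 - (ε / (d:ℝ)) * (ε * d * n)
      = -ε ^ 2 * (n:ℝ) / 2 := by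
    field_simp
    ring
  rw [hexpeq] at hcher
  -- the bad set is small
  have hsubbad : (univ.filter (fun f : Fin n → Fin n => ¬ (Tthr ≤ Sf f)))
      ⊆ (univ.filter (fun f : Fin n → Fin n =>
          Sf f < (∑ f' : Fin n → Fin n, Sf f') / (n:ℝ) ^ n - ε * d * n)) := by
    intro f hf
    have hlt : ¬ (Tthr ≤ Sf f) := (mem_filter.mp hf).2
    rw [not_le] at hlt
    refine mem_filter.mpr ⟨mem_univ _, ?_⟩
    have hμ : Tthr + ε * d * n ≤ (∑ f' : Fin n → Fin n, Sf f') / (n:ℝ) ^ n := by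
      rw [le_div_iff₀ hnnR]
      exact hmean
    have h9 : Sf f < Tthr := hlt
    clear_value Tthr Sf
    linarith
  have hbad : ((univ.filter (fun f : Fin n → Fin n => ¬ (Tthr ≤ Sf f))).card : ℝ)
      ≤ (n:ℝ) ^ n * Real.exp (-ε ^ 2 * (n:ℝ) / 2) := by
    refine le_trans ?_ hcher
    exact_mod_cast card_le_card hsubbad
  -- finish
  have hcards : ((univ.filter (fun f : Fin n → Fin n => Tthr ≤ Sf f)).card : ℝ)
      = (n:ℝ) ^ n - ((univ.filter (fun f : Fin n → Fin n => ¬ (Tthr ≤ Sf f))).card : ℝ) := by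
    have h := card_filter_add_card_filter_not
      (s := (univ : Finset (Fin n → Fin n))) (fun f => Tthr ≤ Sf f)
    rw [card_univ, Fintype.card_fun, Fintype.card_fin] at h
    have h2 := congrArg (Nat.cast : ℕ → ℝ) h
    push_cast at h2
    linarith
  rw [hcards]
  rw [sub_div, div_self (ne_of_gt hnnR)]
  have hb2 : ((univ.filter (fun f : Fin n → Fin n => ¬ (Tthr ≤ Sf f))).card : ℝ) / (n:ℝ) ^ n
      ≤ Real.exp (-ε ^ 2 * (n:ℝ) / 2) := by
    rw [div_le_iff₀ hnnR]
    calc ((univ.filter (fun f : Fin n → Fin n => ¬ (Tthr ≤ Sf f))).card : ℝ)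
        ≤ (n:ℝ) ^ n * Real.exp (-ε ^ 2 * (n:ℝ) / 2) := hbad
      _ = Real.exp (-ε ^ 2 * (n:ℝ) / 2) * (n:ℝ) ^ n := by ring
  have hep := Real.exp_nonneg (-ε ^ 2 * (n:ℝ) / 2)
  linarith
end

section
/- Let n balls be thrown i.i.d. uniformly into n bins, and let B₁, …, B_ℓ be ordered sequences of bins, each consisting of c ≥ 1 pairwise distinct bins, and fix R ⊆ {1,…,c}. Assume c² < n. Let S be the number of satisfied bin sequences. Then E[S] ≥ ℓ·(1 − (2^{|R|}/e^c)·(1 + c²/(n − c²))). -/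
attribute [local instance] Classical.propDecidable

lemma unsat_facts {n c : ℕ} {b : Fin c → Fin n} {R : Finset (Fin c)} {f : Fin n → Fin n}
    (hf : ¬ BinSeqSatisfied n c b R f) :
    (∀ i j, f j = b i → i ∈ R) ∧ (∀ i j j', f j = b i → f j' = b i → j = j') := by
  unfold BinSeqSatisfied at hf
  push_neg at hf
  obtain ⟨h1, h2⟩ := hf
  have hR : ∀ i j, f j = b i → i ∈ R := by
    intro i j hij
    by_contra hiR
    exact h1 i hiR j hij
  refine ⟨hR, fun i j j' hj hj' => ?_⟩
  have hcard : (Finset.univ.filter (fun j => f j = b i)).card ≤ 1 := by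
    have := h2 i (hR i j hj); omega
  exact Finset.card_le_one.mp hcard j (by simp [hj]) j' (by simp [hj'])

lemma prod_ite_mem_card {α : Type*} [Fintype α] (s : Finset α) (m : ℕ) :
    ∏ x : α, (if x ∈ s then m else 1) = m ^ s.card := by
  classical
  rw [Finset.prod_ite_mem Finset.univ s (fun _ => m)]
  simp [Finset.prod_const]

lemma step1 (n c : ℕ) (hcn : c < n) (b : Fin c → Fin n)
    (hb : Function.Injective b) (R : Finset (Fin c))
    (d : Fin n) (hd : ∀ i, d ≠ b i)
    (compl : Finset (Fin n)) (hcompl : compl = (Finset.univ.image b)ᶜ) :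
    (Finset.univ.filter (fun f : Fin n → Fin n => ¬ BinSeqSatisfied n c b R f)).card
      ≤ (R.powerset.sigma (fun T =>
      ((Fintype.piFinset (fun i => if i ∈ T then Finset.univ.image Option.some
            else ({none} : Finset (Option (Fin n))))).filter
        (fun σ => Set.InjOn σ ↑T)).sigma
      (fun σ => Fintype.piFinset (fun j =>
        if ∃ i, σ i = some j then ({d} : Finset (Fin n)) else compl)))).card := by
  classical
  set σF : (Fin n → Fin n) → Fin c → Option (Fin n) :=
    fun f i => if h : i ∈ R ∧ ∃ j, f j = b i then some h.2.choose else none with hσF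
  set gF : (Fin n → Fin n) → Fin n → Fin n :=
    fun f j => if ∃ i, f j = b i then d else f j with hgF
  have hchar : ∀ f : Fin n → Fin n, ¬ BinSeqSatisfied n c b R f →
      ∀ i j, σF f i = some j ↔ f j = b i := by
    intro f hf i j
    obtain ⟨hR, huniq⟩ := unsat_facts hf
    constructor
    · intro h
      by_cases hc2 : i ∈ R ∧ ∃ j, f j = b i
      · rw [hσF] at h
        simp only [dif_pos hc2, Option.some_inj] at h
        rw [← h]
        exact hc2.2.choose_spec
      · rw [hσF] at h
        simp only [dif_neg hc2] at h
        exact absurd h (by simp)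
    · intro h
      have hc2 : i ∈ R ∧ ∃ j, f j = b i := ⟨hR i j h, ⟨j, h⟩⟩
      rw [hσF]
      simp only [dif_pos hc2, Option.some_inj]
      exact huniq i _ j hc2.2.choose_spec h
  apply Finset.card_le_card_of_injOn
    (fun f => (⟨R.filter (fun i => ∃ j, f j = b i), σF f, gF f⟩ :
      Σ _T : Finset (Fin c), Σ _σ : Fin c → Option (Fin n), Fin n → Fin n))
  · intro f hf
    simp only [Finset.mem_coe, Finset.mem_filter, Finset.mem_univ, true_and] at hf ⊢
    obtain ⟨hR, huniq⟩ := unsat_facts hf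
    rw [Finset.mem_sigma]
    refine ⟨Finset.mem_powerset.mpr (Finset.filter_subset _ _), ?_⟩
    rw [Finset.mem_sigma]
    constructor
    · rw [Finset.mem_filter]
      constructor
      · rw [Fintype.mem_piFinset]
        intro i
        by_cases hi : i ∈ R.filter (fun i => ∃ j, f j = b i)
        · rw [if_pos hi]
          simp only [Finset.mem_filter] at hi
          have hc2 : i ∈ R ∧ ∃ j, f j = b i := hi
          simp only [hσF, dif_pos hc2]
          exact Finset.mem_image_of_mem _ (Finset.mem_univ _)
        · rw [if_neg hi]
          have hc2 : ¬ (i ∈ R ∧ ∃ j, f j = b i) := by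
            simpa [Finset.mem_filter] using hi
          simp [hσF, dif_neg hc2]
      · -- InjOn
        intro i hi i' hi' hσ
        dsimp only at hσ
        simp only [Finset.coe_filter, Set.mem_setOf_eq] at hi hi'
        obtain ⟨j, hj⟩ := hi.2
        obtain ⟨j', hj'⟩ := hi'.2
        have e1 : σF f i = some j := (hchar f hf i j).mpr hj
        have e2 : σF f i' = some j' := (hchar f hf i' j').mpr hj'
        rw [e1, e2, Option.some_inj] at hσ
        subst hσ
        exact hb (hj ▸ hj')
    · rw [Fintype.mem_piFinset]
      intro j
      by_cases h : ∃ i, σF f i = some j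
      · rw [if_pos h]
        obtain ⟨i, hi⟩ := h
        have hfj : f j = b i := (hchar f hf i j).mp hi
        have hex : ∃ i, f j = b i := ⟨i, hfj⟩
        have hgj : gF f j = d := by simp only [hgF]; rw [if_pos hex]
        simp [hgj]
      · rw [if_neg h]
        have h2 : ¬ ∃ i, f j = b i := by
          rintro ⟨i, hi⟩
          exact h ⟨i, (hchar f hf i j).mpr hi⟩
        have hgj : gF f j = f j := by simp only [hgF]; rw [if_neg h2]
        show gF f j ∈ compl
        rw [hgj, hcompl]
        simp only [Finset.mem_compl, Finset.mem_image, Finset.mem_univ, true_and]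
        rintro ⟨i, hi⟩
        exact h2 ⟨i, hi.symm⟩
  · intro f hf f' hf' heq
    simp only [Finset.coe_filter, Set.mem_setOf_eq, Finset.mem_univ, true_and] at hf hf'
    dsimp only at heq
    have hσ : σF f = σF f' := congrArg (fun x : (Σ _T : Finset (Fin c),
      Σ _σ : Fin c → Option (Fin n), Fin n → Fin n) => x.2.1) heq
    have hg : gF f = gF f' := congrArg (fun x : (Σ _T : Finset (Fin c),
      Σ _σ : Fin c → Option (Fin n), Fin n → Fin n) => x.2.2) heq
    funext j
    by_cases h : ∃ i, f j = b i
    · obtain ⟨i, hi⟩ := h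
      have e1 : σF f i = some j := (hchar f hf i j).mpr hi
      have e2 : σF f' i = some j := by rw [← hσ]; exact e1
      have hfi' : f' j = b i := (hchar f' hf' i j).mp e2
      rw [hi, hfi']
    · have h' : ¬ ∃ i, f' j = b i := by
        rintro ⟨i, hi⟩
        have e2 : σF f' i = some j := (hchar f' hf' i j).mpr hi
        have e1 : σF f i = some j := by rw [hσ]; exact e2
        exact h ⟨i, (hchar f hf i j).mp e1⟩
      have e1 : gF f j = f j := by simp [hgF, if_neg h]
      have e2 : gF f' j = f' j := by simp [hgF, if_neg h']
      rw [← e1, ← e2, hg]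

lemma step2 (n c : ℕ) (hcn : c < n) (R : Finset (Fin c)) (d : Fin n)
    (compl : Finset (Fin n)) (hcomplcard : compl.card = n - c) :
    (R.powerset.sigma (fun T =>
      ((Fintype.piFinset (fun i => if i ∈ T then Finset.univ.image Option.some
            else ({none} : Finset (Option (Fin n))))).filter
        (fun σ => Set.InjOn σ ↑T)).sigma
      (fun σ => Fintype.piFinset (fun j =>
        if ∃ i, σ i = some j then ({d} : Finset (Fin n)) else compl)))).card
      ≤ ∑ T ∈ R.powerset, n ^ T.card * (n - c) ^ (n - T.card) := by
  classical
  rw [Finset.card_sigma]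
  apply Finset.sum_le_sum
  intro T hT
  rw [Finset.card_sigma]
  have hgb : ∀ σ ∈ (Fintype.piFinset (fun i => if i ∈ T then Finset.univ.image Option.some
            else ({none} : Finset (Option (Fin n))))).filter (fun σ => Set.InjOn σ ↑T),
      (Fintype.piFinset (fun j =>
        if ∃ i, σ i = some j then ({d} : Finset (Fin n)) else compl)).card
        ≤ (n - c) ^ (n - T.card) := by
    intro σ hσ
    rw [Finset.mem_filter] at hσ
    obtain ⟨hσpi, hσinj⟩ := hσ
    rw [Fintype.mem_piFinset] at hσpi
    set S : Finset (Fin n) := Finset.univ.filter (fun j => ∃ i, σ i = some j) with hS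
    have hcard : (Fintype.piFinset (fun j =>
        if ∃ i, σ i = some j then ({d} : Finset (Fin n)) else compl)).card
        = (n - c) ^ (Sᶜ.card) := by
      rw [Fintype.card_piFinset]
      rw [← prod_ite_mem_card Sᶜ (n - c)]
      apply Finset.prod_congr rfl
      intro j _
      by_cases h : ∃ i, σ i = some j
      · rw [if_pos h, if_neg (by simp [hS, h]), Finset.card_singleton]
      · rw [if_neg h, if_pos (by simp only [hS, Finset.mem_compl, Finset.mem_filter,
          Finset.mem_univ, true_and]; exact h), hcomplcard]
    rw [hcard]
    have hTS : T.card ≤ S.card := by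
      apply Finset.card_le_card_of_injOn (fun i => (σ i).getD d)
      · intro i hi
        have := hσpi i
        rw [if_pos (Finset.mem_coe.mp hi)] at this
        rw [Finset.mem_image] at this
        obtain ⟨x, _, hx⟩ := this
        simp [hS, ← hx]
        exact ⟨i, hx.symm⟩
      · intro i hi i' hi' h
        have hsome : ∀ k ∈ T, σ k = some ((σ k).getD d) := by
          intro k hk
          have := hσpi k
          rw [if_pos hk, Finset.mem_image] at this
          obtain ⟨x, _, hx⟩ := this
          rw [← hx]; rfl
        apply hσinj hi hi'
        rw [hsome i hi, hsome i' hi']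
        simpa using h
    have : Sᶜ.card = n - S.card := by
      rw [Finset.card_compl]; simp
    rw [this]
    exact Nat.pow_le_pow_right (by omega) (by omega)
  calc ∑ σ ∈ (Fintype.piFinset (fun i => if i ∈ T then Finset.univ.image Option.some
            else ({none} : Finset (Option (Fin n))))).filter (fun σ => Set.InjOn σ ↑T),
        (Fintype.piFinset (fun j =>
        if ∃ i, σ i = some j then ({d} : Finset (Fin n)) else compl)).card
      ≤ ((Fintype.piFinset (fun i => if i ∈ T then Finset.univ.image Option.some
            else ({none} : Finset (Option (Fin n))))).filter
            (fun σ => Set.InjOn σ ↑T)).card * (n - c) ^ (n - T.card) := by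
        have := Finset.sum_le_card_nsmul _ _ _ hgb
        simpa [smul_eq_mul] using this
    _ ≤ n ^ T.card * (n - c) ^ (n - T.card) := by
        apply Nat.mul_le_mul_right
        calc ((Fintype.piFinset (fun i => if i ∈ T then Finset.univ.image Option.some
            else ({none} : Finset (Option (Fin n))))).filter
            (fun σ => Set.InjOn σ ↑T)).card
            ≤ (Fintype.piFinset (fun i => if i ∈ T then Finset.univ.image Option.some
            else ({none} : Finset (Option (Fin n))))).card :=
              Finset.card_le_card (Finset.filter_subset _ _)
          _ = n ^ T.card := by
              rw [Fintype.card_piFinset]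
              rw [← prod_ite_mem_card T n]
              apply Finset.prod_congr rfl
              intro i _
              by_cases h : i ∈ T
              · rw [if_pos h, if_pos h,
                  Finset.card_image_of_injective _ (Option.some_injective _)]
                simp
              · rw [if_neg h, if_neg h, Finset.card_singleton]


lemma count_unsat_le (n c : ℕ) (hcn : c < n) (b : Fin c → Fin n)
    (hb : Function.Injective b) (R : Finset (Fin c)) :
    (Finset.univ.filter (fun f : Fin n → Fin n => ¬ BinSeqSatisfied n c b R f)).card
      ≤ ∑ T ∈ R.powerset, n ^ T.card * (n - c) ^ (n - T.card) := by
  classical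
  obtain ⟨d, hd⟩ : ∃ d : Fin n, ∀ i, d ≠ b i := by
    by_contra h
    push_neg at h
    have hsurj : Function.Surjective b := by
      intro y; obtain ⟨i, hi⟩ := h y; exact ⟨i, hi.symm⟩
    have := Fintype.card_le_of_surjective b hsurj
    simp at this; omega
  have hcomplcard : ((Finset.univ.image b)ᶜ : Finset (Fin n)).card = n - c := by
    rw [Finset.card_compl, Finset.card_image_of_injective _ hb]
    simp
  exact le_trans (step1 n c hcn b hb R d hd _ rfl)
    (step2 n c hcn R d _ hcomplcard)

lemma sum_pow_bound (n c : ℕ) (hcn : c ≤ n) (R : Finset (Fin c)) :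
    ∑ T ∈ R.powerset, n ^ T.card * (n - c) ^ (n - T.card)
      ≤ 2 ^ R.card * (n ^ R.card * (n - c) ^ (n - R.card)) := by
  classical
  have hrc : R.card ≤ c := by simpa using Finset.card_le_univ R
  have hbd : ∀ T ∈ R.powerset,
      n ^ T.card * (n - c) ^ (n - T.card) ≤ n ^ R.card * (n - c) ^ (n - R.card) := by
    intro T hT
    have hk : T.card ≤ R.card := Finset.card_le_card (Finset.mem_powerset.mp hT)
    calc n ^ T.card * (n - c) ^ (n - T.card)
        = n ^ T.card * ((n - c) ^ (n - R.card) * (n - c) ^ (R.card - T.card)) := by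
          rw [← pow_add]; congr 2; omega
      _ ≤ n ^ T.card * ((n - c) ^ (n - R.card) * n ^ (R.card - T.card)) := by
          apply Nat.mul_le_mul_left
          apply Nat.mul_le_mul_left
          exact Nat.pow_le_pow_left (Nat.sub_le n c) _
      _ = n ^ R.card * (n - c) ^ (n - R.card) := by
          rw [mul_comm ((n-c)^(n - R.card)) _, ← mul_assoc, ← pow_add]
          congr 2; omega
  have := Finset.sum_le_card_nsmul R.powerset _
    (n ^ R.card * (n - c) ^ (n - R.card)) hbd
  simpa [Finset.card_powerset, smul_eq_mul] using this

lemma real_bound (n c r : ℕ) (hc : 1 ≤ c) (hr : r ≤ c) (hcn : c ^ 2 < n) :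
    ((2 ^ r * (n ^ r * (n - c) ^ (n - r)) : ℕ) : ℝ)
      ≤ 2 ^ r / Real.exp 1 ^ c * (1 + (c : ℝ) ^ 2 / ((n : ℝ) - c ^ 2)) * (n : ℝ) ^ n := by
  have hcc : c ≤ c ^ 2 := Nat.le_self_pow two_ne_zero c
  have hcnn : c < n := lt_of_le_of_lt hcc hcn
  have hrn : r ≤ n := le_trans hr (le_of_lt hcnn)
  have hn0 : (0:ℝ) < n := by
    have : 0 < n := by omega
    exact_mod_cast this
  have hcn' : (c:ℝ) ≤ n := by exact_mod_cast le_of_lt hcnn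
  have hcsq : (c:ℝ)^2 < n := by exact_mod_cast hcn
  push_cast [Nat.cast_sub (le_of_lt hcnn)]
  -- key pointwise bound
  have h1 : (n:ℝ) - c ≤ (n:ℝ) * Real.exp (-((c:ℝ)/n)) := by
    have h := mul_le_mul_of_nonneg_left (Real.add_one_le_exp (-((c:ℝ)/n))) (le_of_lt hn0)
    calc (n:ℝ) - c = (n:ℝ) * (-((c:ℝ)/n) + 1) := by field_simp; ring
      _ ≤ (n:ℝ) * Real.exp (-((c:ℝ)/n)) := h
  have h2 : ((n:ℝ) - c) ^ (n - r) ≤ ((n:ℝ) * Real.exp (-((c:ℝ)/n))) ^ (n - r) :=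
    pow_le_pow_left₀ (by linarith) h1 _
  have h3 : ((n:ℝ) * Real.exp (-((c:ℝ)/n))) ^ (n - r)
      = (n:ℝ) ^ (n - r) * Real.exp (((n - r : ℕ):ℝ) * (-((c:ℝ)/n))) := by
    rw [mul_pow, Real.exp_nat_mul]
  have h4 : ((n - r : ℕ):ℝ) * (-((c:ℝ)/n)) ≤ -(c:ℝ) + (c:ℝ)^2/n := by
    rw [Nat.cast_sub hrn]
    have hrc : (r:ℝ) ≤ c := by exact_mod_cast hr
    have e1 : ((n:ℝ) - r) * (-((c:ℝ)/n)) = -(c:ℝ) + (r:ℝ)*(c:ℝ)/n := by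
      field_simp; ring
    rw [e1]
    have e2 : (r:ℝ)*(c:ℝ)/n ≤ (c:ℝ)^2/n := by
      gcongr
      nlinarith
    linarith
  have h6 : Real.exp ((c:ℝ)^2/n) ≤ 1 + (c:ℝ)^2/((n:ℝ) - c^2) := by
    set x : ℝ := (c:ℝ)^2/n with hx
    have hx1 : x < 1 := by rw [hx, div_lt_one hn0]; exact hcsq
    have hpos : 0 < 1 - x := by linarith
    have ha : 1 - x ≤ Real.exp (-x) := by
      have := Real.add_one_le_exp (-x); linarith
    have hb : Real.exp x ≤ 1 / (1 - x) := by
      rw [le_div_iff₀ hpos]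
      calc Real.exp x * (1 - x) ≤ Real.exp x * Real.exp (-x) :=
            mul_le_mul_of_nonneg_left ha (Real.exp_pos x).le
        _ = 1 := by rw [← Real.exp_add]; simp
    have heq : 1 / (1 - x) = 1 + (c:ℝ)^2/((n:ℝ) - c^2) := by
      rw [hx]
      have hne1 : (n:ℝ) ≠ 0 := ne_of_gt hn0
      have hne2 : (n:ℝ) - c^2 ≠ 0 := by linarith
      field_simp
      ring
    linarith [hb, heq ▸ hb]
  have key : ((n:ℝ) - c) ^ (n - r)
      ≤ (n:ℝ) ^ (n - r) * (Real.exp (-(c:ℝ)) * (1 + (c:ℝ)^2/((n:ℝ) - c^2))) := by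
    calc ((n:ℝ) - c) ^ (n - r) ≤ (n:ℝ) ^ (n - r) * Real.exp (((n - r : ℕ):ℝ) * (-((c:ℝ)/n))) := by
          rw [← h3]; exact h2
      _ ≤ (n:ℝ) ^ (n - r) * Real.exp (-(c:ℝ) + (c:ℝ)^2/n) := by
          apply mul_le_mul_of_nonneg_left (Real.exp_le_exp.mpr h4) (by positivity)
      _ = (n:ℝ) ^ (n - r) * (Real.exp (-(c:ℝ)) * Real.exp ((c:ℝ)^2/n)) := by
          rw [Real.exp_add]
      _ ≤ (n:ℝ) ^ (n - r) * (Real.exp (-(c:ℝ)) * (1 + (c:ℝ)^2/((n:ℝ) - c^2))) := by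
          apply mul_le_mul_of_nonneg_left
            (mul_le_mul_of_nonneg_left h6 (Real.exp_pos _).le) (by positivity)
  have hnn : (n:ℝ)^n = (n:ℝ)^r * (n:ℝ)^(n-r) := by
    rw [← pow_add]; congr 1; omega
  have hrhs : 2 ^ r / Real.exp 1 ^ c * (1 + (c : ℝ) ^ 2 / ((n : ℝ) - c ^ 2)) * (n : ℝ) ^ n
      = 2 ^ r * ((n:ℝ)^r * ((n:ℝ)^(n-r) * (Real.exp (-(c:ℝ)) * (1 + (c:ℝ)^2/((n:ℝ) - c^2))))) := by
    rw [hnn, Real.exp_neg, ← Real.exp_one_pow]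
    ring
  rw [hrhs]
  apply mul_le_mul_of_nonneg_left _ (by positivity : (0:ℝ) ≤ 2^r)
  apply mul_le_mul_of_nonneg_left _ (by positivity : (0:ℝ) ≤ (n:ℝ)^r)
  exact key

/-- Balls in bins: `n` balls thrown i.i.d. uniformly into `n` bins.  Given bin
sequences `B₁, …, B_ℓ`, each of `c ≥ 1` pairwise distinct bins with `c² < n`,
and `R ⊆ {1,…,c}`, the expected number of satisfied bin sequences is at least
`ℓ·(1 − (2^{|R|}/e^c)·(1 + c²/(n − c²)))`. -/
theorem satisfied_bin_sequences_expectation (n ℓ c : ℕ) (hc : 1 ≤ c)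
    (hcn : c ^ 2 < n) (B : Fin ℓ → Fin c → Fin n)
    (hinj : ∀ a, Function.Injective (B a)) (R : Finset (Fin c)) :
    (ℓ : ℝ) * (1 - (2 ^ R.card / Real.exp 1 ^ c) * (1 + (c : ℝ) ^ 2 / ((n : ℝ) - c ^ 2)))
      ≤ (∑ f : Fin n → Fin n,
          ((Finset.univ.filter
            (fun a : Fin ℓ => BinSeqSatisfied n c (B a) R f)).card : ℝ)) / (n : ℝ) ^ n := by
  classical
  have hcc : c ≤ c ^ 2 := Nat.le_self_pow two_ne_zero c
  have hcnn : c < n := lt_of_le_of_lt hcc hcn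
  have hrc : R.card ≤ c := by simpa using Finset.card_le_univ R
  have hnpow : (0:ℝ) < (n:ℝ) ^ n := by
    have hn : 0 < n := by omega
    have : (0:ℝ) < (n:ℝ) := by exact_mod_cast hn
    positivity
  set β : ℝ := 2 ^ R.card / Real.exp 1 ^ c * (1 + (c : ℝ) ^ 2 / ((n : ℝ) - c ^ 2)) with hβ
  have hper : ∀ a : Fin ℓ, (1 - β) * (n:ℝ) ^ n ≤
      ((Finset.univ.filter
        (fun f : Fin n → Fin n => BinSeqSatisfied n c (B a) R f)).card : ℝ) := by
    intro a
    have hunsat := (count_unsat_le n c hcnn (B a) (hinj a) R).trans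
      (sum_pow_bound n c (le_of_lt hcnn) R)
    have hreal := real_bound n c R.card hc hrc hcn
    have hU : ((Finset.univ.filter
        (fun f : Fin n → Fin n => ¬ BinSeqSatisfied n c (B a) R f)).card : ℝ)
        ≤ β * (n:ℝ) ^ n := by
      calc ((Finset.univ.filter
          (fun f : Fin n → Fin n => ¬ BinSeqSatisfied n c (B a) R f)).card : ℝ)
          ≤ ((2 ^ R.card * (n ^ R.card * (n - c) ^ (n - R.card)) : ℕ) : ℝ) := by
            exact_mod_cast hunsat
        _ ≤ β * (n:ℝ) ^ n := by rw [hβ]; linarith [hreal]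
    have hsplit : ((Finset.univ.filter
        (fun f : Fin n → Fin n => BinSeqSatisfied n c (B a) R f)).card : ℝ)
        + ((Finset.univ.filter
        (fun f : Fin n → Fin n => ¬ BinSeqSatisfied n c (B a) R f)).card : ℝ)
        = (n:ℝ) ^ n := by
      have hnat : (Finset.univ.filter
          (fun f : Fin n → Fin n => BinSeqSatisfied n c (B a) R f)).card
          + (Finset.univ.filter
          (fun f : Fin n → Fin n => ¬ BinSeqSatisfied n c (B a) R f)).card
          = n ^ n := by
        rw [Finset.card_filter_add_card_filter_not, Finset.card_univ,
          Fintype.card_fun]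
        simp
      exact_mod_cast congrArg (Nat.cast : ℕ → ℝ) hnat
    nlinarith [hU, hsplit]
  have hswapnat : ∑ f : Fin n → Fin n,
      (Finset.univ.filter (fun a : Fin ℓ => BinSeqSatisfied n c (B a) R f)).card
      = ∑ a : Fin ℓ, (Finset.univ.filter
          (fun f : Fin n → Fin n => BinSeqSatisfied n c (B a) R f)).card := by
    simp_rw [Finset.card_filter]
    exact Finset.sum_comm
  have hswap : (∑ f : Fin n → Fin n,
      ((Finset.univ.filter (fun a : Fin ℓ => BinSeqSatisfied n c (B a) R f)).card : ℝ))
      = ∑ a : Fin ℓ, ((Finset.univ.filter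
          (fun f : Fin n → Fin n => BinSeqSatisfied n c (B a) R f)).card : ℝ) := by
    exact_mod_cast congrArg (Nat.cast : ℕ → ℝ) hswapnat
  rw [hswap]
  calc (ℓ : ℝ) * (1 - β)
      = ∑ _a : Fin ℓ, (1 - β) := by
        rw [Finset.sum_const, Finset.card_univ, Fintype.card_fin, nsmul_eq_mul]
    _ ≤ ∑ a : Fin ℓ, ((Finset.univ.filter
          (fun f : Fin n → Fin n => BinSeqSatisfied n c (B a) R f)).card : ℝ) / (n:ℝ) ^ n := by
        apply Finset.sum_le_sum
        intro a _
        rw [le_div_iff₀ hnpow]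
        exact hper a
    _ = (∑ a : Fin ℓ, ((Finset.univ.filter
          (fun f : Fin n → Fin n => BinSeqSatisfied n c (B a) R f)).card : ℝ)) / (n:ℝ) ^ n := by
        rw [Finset.sum_div]
end

section
/- Let n balls be thrown i.i.d. uniformly into n bins, let B = (b₁,…,b_c) be an ordered sequence of c pairwise distinct bins with 1 ≤ c ≤ n, and fix R ⊆ {1,…,c}. Then the probability that B is NOT satisfied is at most 2^{|R|}·(1 − c/n)^{n−c}. -/
attribute [local instance] Classical.propDecidable

lemma prod_ite_card {α : Type*} [Fintype α] [DecidableEq α] (T : Finset α) (m : ℕ) :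
    (∏ j : α, (if j ∈ T then 1 else m)) = m ^ (Fintype.card α - T.card) := by
  rw [Finset.prod_ite, Finset.prod_const_one, Finset.prod_const, one_mul]
  congr 1
  rw [Finset.filter_not, Finset.card_sdiff_of_subset (by simp [Finset.subset_iff])]
  simp

lemma prod_ite_card' {α : Type*} [Fintype α] [DecidableEq α] (T : Finset α) (m : ℕ) :
    (∏ j : α, (if j ∈ T then m else 1)) = m ^ T.card := by
  rw [Finset.prod_ite, Finset.prod_const, Finset.prod_const_one, mul_one]
  congr 1
  simp

lemma bad_card_bound (n c : ℕ) (hc : 1 ≤ c) (hcn : c ≤ n)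
    (b : Fin c → Fin n) (hinj : Function.Injective b) (R : Finset (Fin c)) :
    (Finset.univ.filter (fun f : Fin n → Fin n => ¬ BinSeqSatisfied n c b R f)).card
      ≤ 2 ^ R.card * (n ^ c * (n - c) ^ (n - c)) := by
  classical
  have hn : 0 < n := le_trans hc hcn
  set v₀ : Fin n := ⟨0, hn⟩ with hv₀
  set O : Finset (Fin n) := Finset.univ.filter (fun x => ∀ i, b i ≠ x) with hO
  have hOcard : O.card = n - c := by
    have h1 : O = Finset.univ \ Finset.image b Finset.univ := by
      ext x
      simp [hO, eq_comm]
    rw [h1, Finset.card_sdiff_of_subset (Finset.subset_univ _),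
      Finset.card_image_of_injective _ hinj]
    simp
  set Bad : Finset (Fin n → Fin n) :=
    Finset.univ.filter (fun f => ¬ BinSeqSatisfied n c b R f) with hBad
  set occ : (Fin n → Fin n) → Finset (Fin c) :=
    fun f => R.filter (fun i => ∃ j, f j = b i) with hocc
  have hsub : Bad ⊆ R.powerset.biUnion (fun S => Bad.filter (fun f => occ f = S)) := by
    intro f hf
    rw [Finset.mem_biUnion]
    exact ⟨occ f, Finset.mem_powerset.2 (Finset.filter_subset _ _),
      Finset.mem_filter.2 ⟨hf, rfl⟩⟩
  have key : ∀ S ∈ R.powerset,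
      (Bad.filter (fun f => occ f = S)).card ≤ n ^ S.card * (n - c) ^ (n - S.card) := by
    intro S hS
    set Ψ : Finset (Fin c → Fin n) :=
      (Fintype.piFinset (fun i : Fin c =>
        if i ∈ S then (Finset.univ : Finset (Fin n)) else {v₀})).filter
        (fun ψ => Set.InjOn ψ ↑S) with hΨ
    set G : (Fin c → Fin n) → Finset (Fin n → Fin n) := fun ψ =>
      Fintype.piFinset (fun j : Fin n => if j ∈ S.image ψ then {v₀} else O) with hG
    set E : (Fin n → Fin n) → (Σ _ : Fin c → Fin n, Fin n → Fin n) := fun f =>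
      ⟨fun i => if h : ∃ j, f j = b i then Classical.choose h else v₀,
       fun j => if (∃ i, f j = b i) then v₀ else f j⟩ with hE
    -- facts about each bad f with occupied set S
    have hfacts : ∀ f ∈ Bad.filter (fun f => occ f = S),
        (∀ i ∈ S, f ((E f).1 i) = b i) ∧
        (∀ i ∈ S, ∀ j, f j = b i → j = (E f).1 i) ∧
        (∀ j, (∃ i, f j = b i) ↔ j ∈ S.image ((E f).1)) := by
      intro f hf
      obtain ⟨hfB, hfS⟩ := Finset.mem_filter.1 hf
      have hbad := (Finset.mem_filter.1 hfB).2
      rw [BinSeqSatisfied] at hbad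
      push_neg at hbad
      obtain ⟨hbad1, hbad2⟩ := hbad
      have hball : ∀ i ∈ S, ∃ j, f j = b i := by
        intro i hi
        rw [← hfS] at hi
        exact (Finset.mem_filter.1 hi).2
      have hψspec : ∀ i ∈ S, f ((E f).1 i) = b i := by
        intro i hi
        have h : ∃ j, f j = b i := hball i hi
        simp only [hE, dif_pos h]
        exact Classical.choose_spec h
      have hψuniq : ∀ i ∈ S, ∀ j, f j = b i → j = (E f).1 i := by
        intro i hi j hj
        have hiR : i ∈ R := (Finset.mem_powerset.1 hS) hi
        have hle := hbad2 i hiR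
        have h1 : (Finset.univ.filter (fun j => f j = b i)).card ≤ 1 := by omega
        have hj' : j ∈ Finset.univ.filter (fun j => f j = b i) := by simp [hj]
        have hj'' : (E f).1 i ∈ Finset.univ.filter (fun j => f j = b i) := by
          simp [hψspec i hi]
        exact Finset.card_le_one.1 h1 _ hj' _ hj''
      refine ⟨hψspec, hψuniq, fun j => ?_⟩
      constructor
      · rintro ⟨i, hi⟩
        have hiR : i ∈ R := by
          by_contra hiR
          exact hbad1 i hiR j hi
        have hiS : i ∈ S := by
          rw [← hfS]
          exact Finset.mem_filter.2 ⟨hiR, ⟨j, hi⟩⟩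
        exact Finset.mem_image.2 ⟨i, hiS, (hψuniq i hiS j hi).symm⟩
      · rintro hj
        obtain ⟨i, hiS, hij⟩ := Finset.mem_image.1 hj
        exact ⟨i, hij ▸ hψspec i hiS⟩
    have hEcard : (Bad.filter (fun f => occ f = S)).card ≤ (Ψ.sigma G).card := by
      apply Finset.card_le_card_of_injOn E
      · intro f hf
        obtain ⟨hψspec, hψuniq, hmem⟩ := hfacts f hf
        obtain ⟨hfB, hfS⟩ := Finset.mem_filter.1 hf
        have hbad := (Finset.mem_filter.1 hfB).2
        rw [BinSeqSatisfied] at hbad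
        push_neg at hbad
        obtain ⟨hbad1, hbad2⟩ := hbad
        rw [Finset.mem_coe, Finset.mem_sigma]
        constructor
        · rw [hΨ, Finset.mem_filter]
          constructor
          · rw [Fintype.mem_piFinset]
            intro i
            by_cases hi : i ∈ S
            · simp [hi]
            · rw [if_neg hi]
              simp only [hE]
              rw [Finset.mem_singleton]
              by_cases h : ∃ j, f j = b i
              · exfalso
                obtain ⟨j, hj⟩ := h
                have hiR : i ∈ R := by
                  by_contra hiR
                  exact hbad1 i hiR j hj
                exact hi (by rw [← hfS]; exact Finset.mem_filter.2 ⟨hiR, ⟨j, hj⟩⟩)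
              · simp [dif_neg h]
          · intro x hx y hy hxy
            apply hinj
            rw [← hψspec x hx, ← hψspec y hy, hxy]
        · rw [hG, Fintype.mem_piFinset]
          intro j
          by_cases hj : j ∈ S.image ((E f).1)
          · rw [if_pos hj, Finset.mem_singleton]
            have h : ∃ i, f j = b i := (hmem j).2 hj
            simp [hE, if_pos h]
          · rw [if_neg hj]
            have h : ¬ ∃ i, f j = b i := fun h => hj ((hmem j).1 h)
            simp only [hE, if_neg h]
            rw [hO, Finset.mem_filter]
            exact ⟨Finset.mem_univ _, fun i hi => h ⟨i, hi.symm⟩⟩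
      · -- injectivity
        intro f hf f' hf' hEf
        simp only [Finset.mem_coe] at hf hf'
        obtain ⟨hψspec, hψuniq, hmem⟩ := hfacts f hf
        obtain ⟨hψspec', hψuniq', hmem'⟩ := hfacts f' hf'
        have h1 : (E f).1 = (E f').1 := congrArg Sigma.fst hEf
        have h2 : (E f).2 = (E f').2 := by
          have := congrArg (fun s : (Σ _ : Fin c → Fin n, Fin n → Fin n) => s.2) hEf
          exact this
        funext j
        by_cases h : ∃ i, f j = b i
        · have hj : j ∈ S.image ((E f).1) := (hmem j).1 h
          obtain ⟨i, hiS, hij⟩ := Finset.mem_image.1 hj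
          have e1 : f j = b i := by rw [← hij]; exact hψspec i hiS
          have e2 : f' j = b i := by
            rw [← hij, h1]
            exact hψspec' i hiS
          rw [e1, e2]
        · have h' : ¬ ∃ i, f' j = b i := by
            intro h'
            apply h
            apply (hmem j).2
            rw [h1]
            exact (hmem' j).1 h'
          have e1 : (E f).2 j = f j := by simp only [hE, if_neg h]
          have e2 : (E f').2 j = f' j := by simp only [hE, if_neg h']
          rw [← e1, ← e2, h2]
    have hGcard : ∀ ψ ∈ Ψ, (G ψ).card = (n - c) ^ (n - S.card) := by
      intro ψ hψ
      have hinjOn : Set.InjOn ψ ↑S := (Finset.mem_filter.1 hψ).2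
      have himg : (S.image ψ).card = S.card := Finset.card_image_of_injOn hinjOn
      rw [hG]
      rw [Fintype.card_piFinset]
      have : ∀ j : Fin n, (if j ∈ S.image ψ then ({v₀} : Finset (Fin n)) else O).card
          = if j ∈ S.image ψ then 1 else (n - c) := by
        intro j
        by_cases hj : j ∈ S.image ψ <;> simp [hj, hOcard]
      rw [Finset.prod_congr rfl (fun j _ => this j), prod_ite_card, himg]
      simp
    have hΨcard : Ψ.card ≤ n ^ S.card := by
      calc Ψ.card ≤ (Fintype.piFinset (fun i : Fin c =>
            if i ∈ S then (Finset.univ : Finset (Fin n)) else {v₀})).card :=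
          Finset.card_le_card (Finset.filter_subset _ _)
        _ = n ^ S.card := by
          rw [Fintype.card_piFinset]
          have : ∀ i : Fin c, (if i ∈ S then (Finset.univ : Finset (Fin n)) else {v₀}).card
              = if i ∈ S then n else 1 := by
            intro i
            by_cases hi : i ∈ S <;> simp [hi]
          rw [Finset.prod_congr rfl (fun i _ => this i), prod_ite_card']
    calc (Bad.filter (fun f => occ f = S)).card ≤ (Ψ.sigma G).card := hEcard
      _ = ∑ ψ ∈ Ψ, (G ψ).card := Finset.card_sigma _ _
      _ = ∑ _ψ ∈ Ψ, (n - c) ^ (n - S.card) := Finset.sum_congr rfl hGcard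
      _ = Ψ.card * (n - c) ^ (n - S.card) := by rw [Finset.sum_const, smul_eq_mul]
      _ ≤ n ^ S.card * (n - c) ^ (n - S.card) := by gcongr
  have keyc : ∀ S ∈ R.powerset,
      n ^ S.card * (n - c) ^ (n - S.card) ≤ n ^ c * (n - c) ^ (n - c) := by
    intro S hS
    have hk : S.card ≤ c := le_trans (Finset.card_le_card (Finset.mem_powerset.1 hS))
      (le_of_le_of_eq (Finset.card_le_univ R) (by simp))
    have hsplit : n - S.card = (c - S.card) + (n - c) := by omega
    rw [hsplit, pow_add, ← mul_assoc]
    calc n ^ S.card * (n - c) ^ (c - S.card) * (n - c) ^ (n - c)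
        ≤ n ^ S.card * n ^ (c - S.card) * (n - c) ^ (n - c) := by
          gcongr
          exact Nat.sub_le n c
      _ = n ^ c * (n - c) ^ (n - c) := by rw [← pow_add]; congr 2; omega
  calc Bad.card ≤ (R.powerset.biUnion (fun S => Bad.filter (fun f => occ f = S))).card :=
        Finset.card_le_card hsub
    _ ≤ ∑ S ∈ R.powerset, (Bad.filter (fun f => occ f = S)).card :=
        Finset.card_biUnion_le
    _ ≤ ∑ S ∈ R.powerset, n ^ c * (n - c) ^ (n - c) :=
        Finset.sum_le_sum (fun S hS => le_trans (key S hS) (keyc S hS))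
    _ = 2 ^ R.card * (n ^ c * (n - c) ^ (n - c)) := by
        rw [Finset.sum_const, smul_eq_mul, Finset.card_powerset]

/-- Balls in bins: `n` balls thrown i.i.d. uniformly into `n` bins.  For an
ordered sequence `b` of `c` pairwise distinct bins with `1 ≤ c ≤ n` and a
subset `R ⊆ {1,…,c}`, the probability that `b` is not satisfied is at most
`2^{|R|}·(1 − c/n)^{n−c}`. -/
theorem bin_sequence_unsatisfied_prob (n c : ℕ) (hc : 1 ≤ c) (hcn : c ≤ n)
    (b : Fin c → Fin n) (hinj : Function.Injective b) (R : Finset (Fin c)) :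
    ((Finset.univ.filter (fun f : Fin n → Fin n =>
        ¬ BinSeqSatisfied n c b R f)).card : ℝ) / (n : ℝ) ^ n
      ≤ 2 ^ R.card * (1 - (c : ℝ) / n) ^ (n - c) := by
  have hn : 0 < n := le_trans hc hcn
  have hn' : (0:ℝ) < (n:ℝ) := by exact_mod_cast hn
  rw [div_le_iff₀ (by positivity)]
  calc ((Finset.univ.filter (fun f : Fin n → Fin n =>
        ¬ BinSeqSatisfied n c b R f)).card : ℝ)
      ≤ ((2 ^ R.card * (n ^ c * (n - c) ^ (n - c)) : ℕ) : ℝ) := by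
        exact_mod_cast bad_card_bound n c hc hcn b hinj R
    _ = 2 ^ R.card * ((n:ℝ)^c * ((n:ℝ) - c)^(n-c)) := by push_cast [Nat.cast_sub hcn]; ring
    _ = 2 ^ R.card * (1 - (c:ℝ)/n)^(n-c) * (n:ℝ)^n := by
        have h1 : (1 - (c:ℝ)/n) = ((n:ℝ) - c)/n := by field_simp
        have hnn : (n:ℝ)^n = (n:ℝ)^(n-c) * (n:ℝ)^c := by rw [← pow_add]; congr 1; omega
        rw [h1, div_pow, hnn]
        field_simp
end

section
/- For all natural numbers c, n with 1 ≤ c and c² < n, one has (1 − c/n)^{n−c} ≤ e^{−c}·(1 + c²/(n − c²)). -/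
/-- For all natural numbers `c`, `n` with `1 ≤ c` and `c² < n`, one has
`(1 − c/n)^{n−c} ≤ e^{−c}·(1 + c²/(n − c²))`, where the power `n − c` is a
natural-number power. -/
theorem one_sub_div_pow_le (c n : ℕ) (hc : 1 ≤ c) (hcn : c ^ 2 < n) :
    (1 - (c : ℝ) / n) ^ (n - c)
      ≤ Real.exp (-(c : ℝ)) * (1 + (c : ℝ) ^ 2 / ((n : ℝ) - c ^ 2)) := by
  have hcn' : c < n := lt_of_le_of_lt (Nat.le_self_pow two_ne_zero c) hcn
  have hnR : ((c : ℝ)) ^ 2 < n := by exact_mod_cast hcn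
  have hcR : (c : ℝ) < n := by exact_mod_cast hcn'
  have hc1 : (1 : ℝ) ≤ c := by exact_mod_cast hc
  have hn0 : (0 : ℝ) < n := lt_of_le_of_lt (by positivity) hnR
  have hne : (n : ℝ) ≠ 0 := ne_of_gt hn0
  -- step 1: base bound
  have hbase : (1 - (c : ℝ) / n) ≤ Real.exp (-(c : ℝ) / n) := by
    have := Real.add_one_le_exp (-((c : ℝ) / n))
    rw [neg_div]
    linarith
  have hbase0 : (0 : ℝ) ≤ 1 - (c : ℝ) / n := by
    have : (c : ℝ) / n ≤ 1 := by
      rw [div_le_one hn0]; linarith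
    linarith
  have hpow : (1 - (c : ℝ) / n) ^ (n - c) ≤ Real.exp (-(c : ℝ) / n) ^ (n - c) :=
    pow_le_pow_left₀ hbase0 hbase _
  have hcast : ((n - c : ℕ) : ℝ) = (n : ℝ) - c := by
    exact_mod_cast Nat.cast_sub hcn'.le
  have hexp : Real.exp (-(c : ℝ) / n) ^ (n - c)
      = Real.exp (-(c : ℝ) + (c : ℝ) ^ 2 / n) := by
    rw [← Real.exp_nat_mul, hcast]
    congr 1
    field_simp
    ring
  -- step 2: exp (c^2/n) ≤ 1 + c^2/(n - c^2)
  have hx1 : (c : ℝ) ^ 2 / n < 1 := by rw [div_lt_one hn0]; exact hnR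
  have hkey : Real.exp ((c : ℝ) ^ 2 / n) ≤ 1 + (c : ℝ) ^ 2 / ((n : ℝ) - c ^ 2) := by
    have h1 : 1 - (c : ℝ) ^ 2 / n ≤ Real.exp (-((c : ℝ) ^ 2 / n)) := by
      have := Real.add_one_le_exp (-((c : ℝ) ^ 2 / n))
      linarith
    have h2 : (0 : ℝ) < 1 - (c : ℝ) ^ 2 / n := by linarith
    have h3 : Real.exp ((c : ℝ) ^ 2 / n) ≤ (1 - (c : ℝ) ^ 2 / n)⁻¹ := by
      rw [Real.exp_neg] at h1
      exact (le_inv_comm₀ h2 (Real.exp_pos _)).mp h1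
    refine h3.trans (le_of_eq ?_)
    have hne2 : (n : ℝ) - (c : ℝ) ^ 2 ≠ 0 := by nlinarith
    field_simp
    ring
  calc (1 - (c : ℝ) / n) ^ (n - c)
      ≤ Real.exp (-(c : ℝ) + (c : ℝ) ^ 2 / n) := by rw [← hexp]; exact hpow
    _ = Real.exp (-(c : ℝ)) * Real.exp ((c : ℝ) ^ 2 / n) := Real.exp_add _ _
    _ ≤ Real.exp (-(c : ℝ)) * (1 + (c : ℝ) ^ 2 / ((n : ℝ) - c ^ 2)) := by
        exact mul_le_mul_of_nonneg_left hkey (Real.exp_pos _).le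
end

section
/- Let A be a finite nonempty set and F : A → ℝ satisfy 0 ≤ F(a) ≤ 1 for all a ∈ A and Σ_{a∈A} F(a) = 1. Then Σ_{a∈A} (1 − e^{−F(a)}) ≥ 1 − 1/e. -/
lemma pointwise_exp_bound {x : ℝ} (hx0 : 0 ≤ x) (hx1 : x ≤ 1) :
    (1 - 1 / Real.exp 1) * x ≤ 1 - Real.exp (-x) := by
  have h := convexOn_exp.2 (Set.mem_univ (0:ℝ)) (Set.mem_univ (-1:ℝ))
    (by linarith : (0:ℝ) ≤ 1 - x) hx0 (by ring)
  simp only [smul_eq_mul, mul_zero, mul_neg, mul_one, Real.exp_zero, zero_add] at h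
  have hexp : Real.exp (-1) = 1 / Real.exp 1 := by
    rw [Real.exp_neg]; ring
  rw [hexp] at h
  nlinarith [h]

/-- Let `A` be a finite nonempty set and `F : A → ℝ` with `0 ≤ F a ≤ 1` for
all `a` and `∑ a, F a = 1`.  Then `∑ a, (1 − e^{−F a}) ≥ 1 − 1/e`. -/
theorem sum_one_sub_exp_neg_ge {A : Type*} [Fintype A] [Nonempty A]
    (F : A → ℝ) (h0 : ∀ a, 0 ≤ F a) (h1 : ∀ a, F a ≤ 1)
    (hsum : ∑ a, F a = 1) :
    1 - 1 / Real.exp 1 ≤ ∑ a, (1 - Real.exp (-F a)) := by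
  calc 1 - 1 / Real.exp 1 = ∑ a, (1 - 1 / Real.exp 1) * F a := by
        rw [← Finset.mul_sum, hsum, mul_one]
    _ ≤ ∑ a, (1 - Real.exp (-F a)) :=
        Finset.sum_le_sum fun a _ => pointwise_exp_bound (h0 a) (h1 a)
end

section
/- Let n ≥ 2 and let f : Fin n → Fin n be a uniformly random function, and let b₁ ≠ b₂ be two fixed distinct bins. Then the probability that bin b₁ receives no ball and bin b₂ receives at most one ball equals (1 − 2/n)ⁿ + (1 − 2/n)^{n−1}, and this probability tends to 2/e² as n → ∞. -/
open Filter

lemma card_forall_mem {n : ℕ} (T : Fin n → Finset (Fin n)) :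
    (Finset.univ.filter (fun f : Fin n → Fin n => ∀ j, f j ∈ T j)).card
      = ∏ j, (T j).card := by
  rw [show Finset.univ.filter (fun f : Fin n → Fin n => ∀ j, f j ∈ T j)
      = Fintype.piFinset T by ext f; simp [Fintype.mem_piFinset],
    Fintype.card_piFinset]

lemma count_main (n : ℕ) (b₁ b₂ : Fin n) (hb : b₁ ≠ b₂) :
    (Finset.univ.filter (fun f : Fin n → Fin n =>
      (Finset.univ.filter (fun j => f j = b₁)).card = 0 ∧
      (Finset.univ.filter (fun j => f j = b₂)).card ≤ 1)).card
    = (n-2)^n + n * (n-2)^(n-1) := by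
  set C : Finset (Fin n) := Finset.univ \ {b₁, b₂} with hC
  have hCcard : C.card = n - 2 := by
    rw [hC, Finset.card_sdiff_of_subset (by simp)]
    simp [Finset.card_insert_of_notMem, hb]
  have hmemC : ∀ x : Fin n, x ∈ C ↔ x ≠ b₁ ∧ x ≠ b₂ := by
    intro x; simp [hC]
  set T : Fin n → Fin n → Finset (Fin n) :=
    fun i j => if j = i then ({b₂} : Finset (Fin n)) else C with hT
  set F0 := Finset.univ.filter (fun f : Fin n → Fin n => ∀ j, f j ∈ C) with hF0
  set F1 := Finset.univ.biUnion
    (fun i : Fin n => Finset.univ.filter (fun f : Fin n → Fin n => ∀ j, f j ∈ T i j)) with hF1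
  have hsplit : Finset.univ.filter (fun f : Fin n → Fin n =>
      (Finset.univ.filter (fun j => f j = b₁)).card = 0 ∧
      (Finset.univ.filter (fun j => f j = b₂)).card ≤ 1) = F0 ∪ F1 := by
    ext f
    simp only [hF0, hF1, Finset.mem_union, Finset.mem_biUnion, Finset.mem_filter,
      Finset.mem_univ, true_and, true_implies, Finset.card_eq_zero,
      Finset.filter_eq_empty_iff, Finset.card_le_one]
    constructor
    · rintro ⟨h1, h2⟩
      by_cases hex : ∃ i, f i = b₂
      · obtain ⟨i, hi⟩ := hex
        right
        refine ⟨i, fun j => ?_⟩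
        by_cases hji : j = i
        · simp [hT, hji, hi]
        · simp only [hT, if_neg hji, hmemC]
          exact ⟨fun hc => h1 hc, fun hc => hji (h2 j hc i hi)⟩
      · left
        intro j
        rw [hmemC]
        exact ⟨fun hc => h1 hc, fun hc => hex ⟨j, hc⟩⟩
    · rintro (h | ⟨i, h⟩)
      · refine ⟨fun j => ((hmemC _).1 (h j)).1, fun j hj j' hj' => ?_⟩
        exact absurd hj ((hmemC _).1 (h j)).2
      · constructor
        · intro j
          have := h j
          by_cases hji : j = i
          · simp only [hT, if_pos hji, Finset.mem_singleton] at this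
            rw [this]; exact hb.symm
          · exact ((hmemC _).1 (by simpa [hT, hji] using this)).1
        · intro j hj j' hj'
          have hji : j = i := by
            by_contra hc
            have := h j
            simp only [hT, if_neg hc, hmemC] at this
            exact this.2 hj
          have hji' : j' = i := by
            by_contra hc
            have := h j'
            simp only [hT, if_neg hc, hmemC] at this
            exact this.2 hj'
          rw [hji, hji']
  rw [hsplit]
  have hb2C : b₂ ∉ C := by simp [hC]
  have hpw : ∀ i ∈ Finset.univ, ∀ i' ∈ Finset.univ, i ≠ i' →
      Disjoint (Finset.univ.filter (fun f : Fin n → Fin n => ∀ j, f j ∈ T i j))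
        (Finset.univ.filter (fun f : Fin n → Fin n => ∀ j, f j ∈ T i' j)) := by
    intro i _ i' _ hii'
    rw [Finset.disjoint_left]
    intro f hf hf'
    simp only [Finset.mem_filter] at hf hf'
    have h1 := hf.2 i
    have h2 := hf'.2 i
    simp only [hT, if_pos rfl, Finset.mem_singleton] at h1
    simp only [hT] at h2
    rw [if_neg hii'] at h2
    exact hb2C (h1 ▸ h2)
  have hdisj : Disjoint F0 F1 := by
    rw [Finset.disjoint_left]
    intro f hf0 hf1
    simp only [hF0, Finset.mem_filter] at hf0
    simp only [hF1, Finset.mem_biUnion, Finset.mem_filter] at hf1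
    obtain ⟨i, hi⟩ := hf1
    have := hi.2.2 i
    simp only [hT, if_pos rfl, Finset.mem_singleton] at this
    exact hb2C (this ▸ hf0.2 i)
  rw [Finset.card_union_of_disjoint hdisj]
  have hc0 : F0.card = (n-2)^n := by
    rw [hF0, card_forall_mem (fun _ => C)]
    simp [hCcard]
  have hcard : ∀ i : Fin n,
      (Finset.univ.filter (fun f : Fin n → Fin n => ∀ j, f j ∈ T i j)).card
        = (n-2)^(n-1) := by
    intro i
    rw [card_forall_mem (T i)]
    rw [← Finset.mul_prod_erase Finset.univ _ (Finset.mem_univ i)]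
    have h1 : (T i i).card = 1 := by simp [hT]
    have h2 : ∏ j ∈ Finset.univ.erase i, (T i j).card = (n-2)^(n-1) := by
      rw [Finset.prod_congr rfl (fun j hj => by
        simp only [hT, if_neg (Finset.ne_of_mem_erase hj)]; rfl)]
      rw [Finset.prod_const, hCcard, Finset.card_erase_of_mem (Finset.mem_univ i)]
      simp
    rw [h1, h2, one_mul]
  have hc1 : F1.card = n * (n-2)^(n-1) := by
    rw [hF1, Finset.card_biUnion hpw,
      Finset.sum_congr rfl (fun i _ => hcard i), Finset.sum_const, Finset.card_univ,
      Fintype.card_fin, smul_eq_mul]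
  rw [hc0, hc1]

/-- The probability (over a uniformly random `f : Fin n → Fin n`) that bin
`b₁` receives no ball and bin `b₂` receives at most one ball. -/
noncomputable def probEmptyAtMostOne (n : ℕ) (b₁ b₂ : Fin n) : ℝ :=
  ((Finset.univ.filter (fun f : Fin n → Fin n =>
      (Finset.univ.filter (fun j => f j = b₁)).card = 0 ∧
      (Finset.univ.filter (fun j => f j = b₂)).card ≤ 1)).card : ℝ) / (n : ℝ) ^ n

/-- For `n ≥ 2` balls thrown i.i.d. uniformly into `n` bins and two fixed
distinct bins `b₁ ≠ b₂`, the probability that `b₁` receives no ball and `b₂`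
receives at most one ball equals `(1 − 2/n)ⁿ + (1 − 2/n)^{n−1}`, and this
probability tends to `2/e²` as `n → ∞`. -/
theorem two_bins_empty_atMostOne_prob :
    (∀ n : ℕ, 2 ≤ n → ∀ b₁ b₂ : Fin n, b₁ ≠ b₂ →
        probEmptyAtMostOne n b₁ b₂
          = (1 - 2 / (n : ℝ)) ^ n + (1 - 2 / (n : ℝ)) ^ (n - 1))
      ∧ Tendsto (fun n : ℕ => (1 - 2 / (n : ℝ)) ^ n + (1 - 2 / (n : ℝ)) ^ (n - 1))
          atTop (nhds (2 / Real.exp 1 ^ 2)) := by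
  constructor
  · intro n hn b₁ b₂ hb
    rw [probEmptyAtMostOne, count_main n b₁ b₂ hb]
    have hn0 : (n:ℝ) ≠ 0 := by positivity
    have hcast : ((n - 2 : ℕ) : ℝ) = (n:ℝ) - 2 := by
      push_cast [hn]; ring
    have h1 : (1 - 2 / (n:ℝ)) = ((n:ℝ) - 2) / n := by field_simp
    have hpow : (n:ℝ)^n = (n:ℝ)^(n-1) * n := by
      rw [← pow_succ]; congr 1; omega
    push_cast [hcast]
    rw [h1, div_pow, div_pow, hpow]
    field_simp
  · have h1 : Tendsto (fun n : ℕ => (1 - 2 / (n:ℝ)) ^ n) atTop (nhds (Real.exp (-2))) := by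
      have := Real.tendsto_one_add_div_pow_exp (-2)
      simpa [sub_eq_add_neg, neg_div] using this
    have hbase : Tendsto (fun n : ℕ => (1 - 2 / (n:ℝ))) atTop (nhds 1) := by
      have := tendsto_const_div_atTop_nhds_zero_nat (2:ℝ)
      have h := (tendsto_const_nhds (x := (1:ℝ)) (f := atTop (α := ℕ))).sub this
      simpa using h
    have h2 : Tendsto (fun n : ℕ => (1 - 2 / (n:ℝ)) ^ (n-1)) atTop (nhds (Real.exp (-2))) := by
      have hq : Tendsto (fun n : ℕ => (1 - 2 / (n:ℝ)) ^ n / (1 - 2 / (n:ℝ))) atTop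
          (nhds (Real.exp (-2))) := by
        have := h1.div hbase one_ne_zero; rw [div_one] at this; exact this
      refine hq.congr' ?_
      filter_upwards [eventually_ge_atTop 3] with n hn
      have hn0 : (n:ℝ) ≠ 0 := by positivity
      have hne : (1 - 2 / (n:ℝ)) ≠ 0 := by
        have : 2 / (n:ℝ) < 1 := by
          rw [div_lt_one (by positivity)]
          exact_mod_cast lt_of_lt_of_le (by norm_num) hn
        linarith
      have : (1 - 2 / (n:ℝ)) ^ n = (1 - 2 / (n:ℝ)) ^ (n-1) * (1 - 2 / (n:ℝ)) := by
        rw [← pow_succ]; congr 1; omega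
      rw [this, mul_div_assoc, div_self hne, mul_one]
    have := h1.add h2
    convert this using 2
    rw [Real.exp_one_pow, Nat.cast_ofNat, Real.exp_neg]
    field_simp
    ring
end

section
/- Let G be a bipartite graph with advertiser part A (finite) and impression part I with |I| = n ≥ 1, edge set E ⊆ A × I, and maximum matching size ν. Let f : Fin n → I be n i.i.d. uniform draws from I. Then for every ε > 0, with probability at least 1 − e^{−2ε²n}, the maximum matching size of the realization graph is at most ν + εn. -/
attribute [local instance] Classical.propDecidable

/-- `P` is a matching of the realization graph determined by the draws
`f : Fin n → I` (with `I = Fin n`): every pair `(t, a) ∈ P` satisfies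
`(a, f t) ∈ E`, and no time step and no advertiser appears twice in `P`. -/
def IsRealizationMatching {A : Type*} (n : ℕ) (E : Finset (A × Fin n))
    (f : Fin n → Fin n) (P : Finset (Fin n × A)) : Prop :=
  (∀ p ∈ P, (p.2, f p.1) ∈ E) ∧
    ∀ p ∈ P, ∀ q ∈ P, p ≠ q → p.1 ≠ q.1 ∧ p.2 ≠ q.2

/-- The maximum matching size `OPT(f)` of the realization graph determined by
the draws `f`. -/
noncomputable def realizationOPT {A : Type*} [Fintype A] [DecidableEq A] (n : ℕ)
    (E : Finset (A × Fin n)) (f : Fin n → Fin n) : ℕ :=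
  (Finset.univ.filter (fun P : Finset (Fin n × A) =>
    IsRealizationMatching n E f P)).sup Finset.card

lemma hoeff_key (p : ℝ) (hp0 : 0 ≤ p) (hp1 : p ≤ 1) (x : ℝ) :
    1 - p + p * Real.exp x ≤ Real.exp (p * x + x ^ 2 / 8) := by
  rcases eq_or_lt_of_le hp0 with h0 | h0
  · simp only [← h0]
    simpa using Real.one_le_exp (by positivity)
  rcases eq_or_lt_of_le hp1 with h1 | h1
  · subst h1
    simpa using Real.exp_le_exp.mpr (by nlinarith [sq_nonneg x])
  -- 0 < p < 1
  set q : ℝ := 1 - p with hq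
  have hqpos : 0 < q := by simp [hq]; linarith
  have hc : ∀ x : ℝ, 0 < q + p * Real.exp x := fun x => by positivity
  set g : ℝ → ℝ := fun x => p * x + x ^ 2 / 8 - Real.log (q + p * Real.exp x) with hgdef
  set g1 : ℝ → ℝ := fun x => p + x / 4 - p * Real.exp x / (q + p * Real.exp x) with hg1def
  have hcd : ∀ x : ℝ, HasDerivAt (fun y => q + p * Real.exp y) (p * Real.exp x) x := by
    intro x
    exact ((Real.hasDerivAt_exp x).const_mul p).const_add q
  have hg : ∀ x : ℝ, HasDerivAt g (g1 x) x := by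
    intro x
    have h1 : HasDerivAt (fun y : ℝ => p * y) p x := by
      simpa using (hasDerivAt_id x).const_mul p
    have h2 : HasDerivAt (fun y : ℝ => y ^ 2 / 8) (x / 4) x := by
      have := (hasDerivAt_pow 2 x).div_const 8
      convert this using 1
      · rfl
      · rfl
      push_cast
      ring
    have h3 : HasDerivAt (fun y => Real.log (q + p * Real.exp y))
        (p * Real.exp x / (q + p * Real.exp x)) x := (hcd x).log (hc x).ne'
    exact (h1.add h2).sub h3
  have hg1 : ∀ x : ℝ, HasDerivAt g1
      (1 / 4 - p * q * Real.exp x / (q + p * Real.exp x) ^ 2) x := by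
    intro x
    have h2 : HasDerivAt (fun y : ℝ => y / 4) (1 / 4) x := by
      simpa using (hasDerivAt_id x).div_const 4
    have h3 : HasDerivAt (fun y => p * Real.exp y / (q + p * Real.exp y))
        ((p * Real.exp x * (q + p * Real.exp x) - p * Real.exp x * (p * Real.exp x)) /
          (q + p * Real.exp x) ^ 2) x :=
      ((Real.hasDerivAt_exp x).const_mul p).div (hcd x) (hc x).ne'
    have := ((hasDerivAt_const x p).add h2).sub h3
    convert this using 1
    · rfl
    · rfl
    · rfl
    have := (hc x).ne'
    field_simp
    ring
  have hderivg1 : ∀ x : ℝ, 0 ≤ deriv g1 x := by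
    intro x
    rw [(hg1 x).deriv]
    have hex : 0 < Real.exp x := Real.exp_pos x
    have hsq : 0 ≤ (q - p * Real.exp x) ^ 2 := sq_nonneg _
    have hc2 : 0 < (q + p * Real.exp x) ^ 2 := by positivity
    rw [sub_nonneg, div_le_iff₀ hc2]
    have hr : (q + p * Real.exp x) ^ 2 - 4 * (p * q * Real.exp x)
        = (q - p * Real.exp x) ^ 2 := by ring
    clear_value q
    linarith
  have hg1mono : Monotone g1 :=
    monotone_of_deriv_nonneg (fun x => (hg1 x).differentiableAt) hderivg1
  have hg10 : g1 0 = 0 := by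
    simp [hg1def, hq]
  have hgdiff : Differentiable ℝ g := fun x => (hg x).differentiableAt
  have hmono : MonotoneOn g (Set.Ici 0) := by
    apply monotoneOn_of_deriv_nonneg (convex_Ici 0) hgdiff.continuous.continuousOn
      (hgdiff.differentiableOn)
    intro x hx
    rw [(hg x).deriv, ← hg10]
    exact hg1mono (le_of_lt (by simpa using hx))
  have hanti : AntitoneOn g (Set.Iic 0) := by
    apply antitoneOn_of_deriv_nonpos (convex_Iic 0) hgdiff.continuous.continuousOn
      (hgdiff.differentiableOn)
    intro x hx
    rw [(hg x).deriv, ← hg10]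
    exact hg1mono (le_of_lt (by simpa using hx))
  have hg0 : g 0 = 0 := by simp [hgdef, hq]
  have hgx : ∀ x : ℝ, 0 ≤ g x := by
    intro x
    rcases le_total 0 x with hx | hx
    · rw [← hg0]; exact hmono Set.self_mem_Ici hx hx
    · rw [← hg0]; exact hanti hx Set.self_mem_Iic hx
  have := hgx x
  have hlog : Real.log (q + p * Real.exp x) ≤ p * x + x ^ 2 / 8 := by
    simp only [hgdef] at this; linarith
  calc q + p * Real.exp x = Real.exp (Real.log (q + p * Real.exp x)) :=
        (Real.exp_log (hc x)).symm
    _ ≤ Real.exp (p * x + x ^ 2 / 8) := Real.exp_le_exp.mpr hlog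

lemma hoeff_point (p : ℝ) (hp0 : 0 ≤ p) (hp1 : p ≤ 1) (x : ℝ) :
    p * Real.exp (x * (1 - p)) + (1 - p) * Real.exp (-(x * p)) ≤ Real.exp (x ^ 2 / 8) := by
  have key := hoeff_key p hp0 hp1 x
  have e1 : Real.exp (x * (1 - p)) = Real.exp (-(x * p)) * Real.exp x := by
    rw [← Real.exp_add]; ring_nf
  have h : p * Real.exp (x * (1 - p)) + (1 - p) * Real.exp (-(x * p))
      = Real.exp (-(x * p)) * (1 - p + p * Real.exp x) := by
    rw [e1]; ring
  rw [h]
  calc Real.exp (-(x * p)) * (1 - p + p * Real.exp x)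
      ≤ Real.exp (-(x * p)) * Real.exp (p * x + x ^ 2 / 8) := by
        exact mul_le_mul_of_nonneg_left key (Real.exp_pos _).le
    _ = Real.exp (x ^ 2 / 8) := by rw [← Real.exp_add]; ring_nf

lemma count_hoeffding (n : ℕ) (hn : 1 ≤ n) (S : Finset (Fin n)) (ε : ℝ) (hε : 0 < ε) :
    ((Finset.univ.filter (fun f : Fin n → Fin n =>
        (S.card : ℝ) + ε * n < ((Finset.univ.filter (fun t => f t ∈ S)).card : ℝ))).card : ℝ)
      ≤ Real.exp (-2 * ε ^ 2 * n) * (n : ℝ) ^ n := by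
  have hn0 : (0 : ℝ) < n := by exact_mod_cast hn
  set L : ℝ := 4 * ε with hL
  have hLpos : 0 < L := by positivity
  set p : ℝ := (S.card : ℝ) / n with hp
  have hp0 : 0 ≤ p := by positivity
  have hsle : (S.card : ℝ) ≤ n := by
    exact_mod_cast (S.card_le_univ.trans_eq (by simp))
  have hp1 : p ≤ 1 := by rw [hp, div_le_one hn0]; exact hsle
  have hnp : (n : ℝ) * p = S.card := by rw [hp]; field_simp
  set g : Fin n → ℝ := fun i => Real.exp (L * ((if i ∈ S then (1 : ℝ) else 0) - p)) with hg
  have hprod : ∀ f : Fin n → Fin n, (∏ t, g (f t))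
      = Real.exp (L * (((Finset.univ.filter (fun t => f t ∈ S)).card : ℝ) - S.card)) := by
    intro f
    rw [← Real.exp_sum]
    congr 1
    rw [← Finset.mul_sum]
    congr 1
    rw [Finset.sum_sub_distrib, Finset.sum_boole, Finset.sum_const, Finset.card_univ,
      Fintype.card_fin, nsmul_eq_mul, hnp]
  have hsum : (∑ f : Fin n → Fin n, ∏ t, g (f t)) = (∑ i, g i) ^ n :=
    (Fintype.sum_pow g n).symm
  have hgsum : (∑ i, g i) = (S.card : ℝ) * Real.exp (L * (1 - p))
      + ((n : ℝ) - S.card) * Real.exp (-(L * p)) := by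
    rw [← Finset.sum_add_sum_compl S]
    congr 1
    · calc ∑ i ∈ S, Real.exp (L * ((if i ∈ S then (1 : ℝ) else 0) - p))
          = ∑ _i ∈ S, Real.exp (L * (1 - p)) :=
            Finset.sum_congr rfl fun i hi => by rw [if_pos hi]
        _ = (S.card : ℝ) * Real.exp (L * (1 - p)) := by
            rw [Finset.sum_const, nsmul_eq_mul]
    · calc ∑ i ∈ Sᶜ, Real.exp (L * ((if i ∈ S then (1 : ℝ) else 0) - p))
          = ∑ _i ∈ Sᶜ, Real.exp (-(L * p)) :=
            Finset.sum_congr rfl fun i hi => by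
              rw [if_neg (Finset.mem_compl.mp hi)]; congr 1; ring
        _ = ((Sᶜ.card : ℕ) : ℝ) * Real.exp (-(L * p)) := by
            rw [Finset.sum_const, nsmul_eq_mul]
        _ = ((n : ℝ) - S.card) * Real.exp (-(L * p)) := by
            rw [Finset.card_compl, Fintype.card_fin,
              Nat.cast_sub (by exact_mod_cast hsle)]
  have hper : (∑ i, g i) ≤ (n : ℝ) * Real.exp (L ^ 2 / 8) := by
    rw [hgsum]
    have hpt := hoeff_point p hp0 hp1 L
    have hexpand : (n : ℝ) * (p * Real.exp (L * (1 - p)) + (1 - p) * Real.exp (-(L * p)))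
        = ((n : ℝ) * p) * Real.exp (L * (1 - p))
          + ((n : ℝ) - (n : ℝ) * p) * Real.exp (-(L * p)) := by ring
    rw [hnp] at hexpand
    nlinarith [mul_le_mul_of_nonneg_left hpt hn0.le]
  set Bad := Finset.univ.filter (fun f : Fin n → Fin n =>
    (S.card : ℝ) + ε * n < ((Finset.univ.filter (fun t => f t ∈ S)).card : ℝ)) with hBad
  have hmark : (Bad.card : ℝ) * Real.exp (L * (ε * n)) ≤ ∑ f : Fin n → Fin n, ∏ t, g (f t) := by
    calc (Bad.card : ℝ) * Real.exp (L * (ε * n)) = ∑ _f ∈ Bad, Real.exp (L * (ε * n)) := by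
          rw [Finset.sum_const, nsmul_eq_mul]
      _ ≤ ∑ f ∈ Bad, ∏ t, g (f t) := by
          refine Finset.sum_le_sum fun f hf => ?_
          rw [hprod f]
          refine Real.exp_le_exp.mpr (mul_le_mul_of_nonneg_left ?_ hLpos.le)
          have := (Finset.mem_filter.mp hf).2
          linarith
      _ ≤ ∑ f : Fin n → Fin n, ∏ t, g (f t) := by
          refine Finset.sum_le_sum_of_subset_of_nonneg (Finset.filter_subset _ _)
            fun f _ _ => Finset.prod_nonneg fun t _ => (Real.exp_pos _).le
  have hsumnn : 0 ≤ ∑ i, g i := Finset.sum_nonneg fun i _ => (Real.exp_pos _).le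
  have hfinal : (Bad.card : ℝ) * Real.exp (L * (ε * n))
      ≤ (n : ℝ) ^ n * Real.exp ((n : ℝ) * (L ^ 2 / 8)) := by
    calc (Bad.card : ℝ) * Real.exp (L * (ε * n)) ≤ (∑ i, g i) ^ n := hmark.trans_eq hsum
      _ ≤ ((n : ℝ) * Real.exp (L ^ 2 / 8)) ^ n := pow_le_pow_left₀ hsumnn hper n
      _ = (n : ℝ) ^ n * Real.exp ((n : ℝ) * (L ^ 2 / 8)) := by
          rw [mul_pow, ← Real.exp_nat_mul]
  have hKe : (n : ℝ) ^ n * Real.exp ((n : ℝ) * (L ^ 2 / 8))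
      = (Real.exp (-2 * ε ^ 2 * n) * (n : ℝ) ^ n) * Real.exp (L * (ε * n)) := by
    rw [mul_comm (Real.exp (-2 * ε ^ 2 * n)) ((n : ℝ) ^ n), mul_assoc, ← Real.exp_add]
    congr 1
    rw [hL]; ring
  rw [hKe] at hfinal
  exact le_of_mul_le_mul_right hfinal (Real.exp_pos _)

lemma exists_cover {A : Type*} [Fintype A] [DecidableEq A] {n : ℕ} (hn : 1 ≤ n)
    (E : Finset (A × Fin n)) (ν : ℕ)
    (hub : ∀ M : Finset (A × Fin n), M ⊆ E →
      (∀ p ∈ M, ∀ q ∈ M, p ≠ q → p.1 ≠ q.1 ∧ p.2 ≠ q.2) → M.card ≤ ν) :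
    ∃ (CA : Finset A) (CI : Finset (Fin n)),
      (∀ p ∈ E, p.1 ∈ CA ∨ p.2 ∈ CI) ∧ CA.card + CI.card ≤ ν := by
  classical
  set N : Finset A → Finset (Fin n) :=
    fun S => (E.filter (fun p => p.1 ∈ S)).image Prod.snd with hN
  set h : Finset A → ℕ := fun S => (Finset.univ \ S).card + (N S).card with hh
  obtain ⟨S₀, -, hS₀⟩ := Finset.exists_min_image (Finset.univ : Finset (Finset A)) h
    ⟨∅, Finset.mem_univ _⟩
  refine ⟨Finset.univ \ S₀, N S₀, ?_, ?_⟩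
  · intro pr hpr
    by_cases hc : pr.1 ∈ S₀
    · exact Or.inr (Finset.mem_image.mpr ⟨pr, Finset.mem_filter.mpr ⟨hpr, hc⟩, rfl⟩)
    · exact Or.inl (Finset.mem_sdiff.mpr ⟨Finset.mem_univ _, hc⟩)
  have hmA : h S₀ ≤ Fintype.card A := by
    have h0 := hS₀ ∅ (Finset.mem_univ _)
    have hNe : N ∅ = ∅ := by
      rw [hN]
      simp
    have : h ∅ = Fintype.card A := by
      rw [hh]
      simp [hNe, Finset.card_univ]
    omega
  set m := h S₀ with hm
  set d := Fintype.card A - m with hd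
  set t : A → Finset (Fin n ⊕ Fin d) :=
    fun a => ((N {a}).image Sum.inl) ∪ (Finset.univ.image Sum.inr) with ht
  have hall : ∀ s : Finset A, s.card ≤ (s.biUnion t).card := by
    intro s
    rcases s.eq_empty_or_nonempty with rfl | ⟨a₀, ha₀⟩
    · simp
    have hsub : ((N s).image Sum.inl ∪ (Finset.univ.image Sum.inr : Finset (Fin n ⊕ Fin d)))
        ⊆ s.biUnion t := by
      intro x hx
      rcases Finset.mem_union.mp hx with hx | hx
      · obtain ⟨i, hi, rfl⟩ := Finset.mem_image.mp hx
        obtain ⟨pr, hpr, rfl⟩ := Finset.mem_image.mp hi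
        have hpr' := Finset.mem_filter.mp hpr
        refine Finset.mem_biUnion.mpr ⟨pr.1, hpr'.2, Finset.mem_union_left _ ?_⟩
        exact Finset.mem_image.mpr ⟨pr.2, Finset.mem_image.mpr
          ⟨pr, Finset.mem_filter.mpr ⟨hpr'.1, Finset.mem_singleton_self _⟩, rfl⟩, rfl⟩
      · exact Finset.mem_biUnion.mpr ⟨a₀, ha₀, Finset.mem_union_right _ hx⟩
    have hdisj : Disjoint ((N s).image Sum.inl)
        (Finset.univ.image Sum.inr : Finset (Fin n ⊕ Fin d)) := by
      rw [Finset.disjoint_left]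
      rintro x hx hx'
      obtain ⟨i, -, rfl⟩ := Finset.mem_image.mp hx
      obtain ⟨j, -, hj⟩ := Finset.mem_image.mp hx'
      exact Sum.inl_ne_inr hj.symm
    have hcard : (N s).card + d ≤ (s.biUnion t).card := by
      calc (N s).card + d
          = ((N s).image Sum.inl ∪ (Finset.univ.image Sum.inr : Finset (Fin n ⊕ Fin d))).card := by
            rw [Finset.card_union_of_disjoint hdisj,
              Finset.card_image_of_injective _ Sum.inl_injective,
              Finset.card_image_of_injective _ Sum.inr_injective,
              Finset.card_univ, Fintype.card_fin]
        _ ≤ (s.biUnion t).card := Finset.card_le_card hsub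
    have hmin := hS₀ s (Finset.mem_univ _)
    have h1 : (Finset.univ \ s).card = Fintype.card A - s.card := by
      rw [Finset.card_sdiff_of_subset (Finset.subset_univ s), Finset.card_univ]
    have h2 : s.card ≤ Fintype.card A := by
      simpa [Finset.card_univ] using Finset.card_le_card (Finset.subset_univ s)
    rw [hh] at hmin
    simp only at hmin
    rw [h1] at hmin
    -- hmin : m ≤ Fintype.card A - s.card + (N s).card
    omega
  obtain ⟨F, hFinj, hFmem⟩ := (Finset.all_card_le_biUnion_card_iff_exists_injective t).mp hall
  set M : Finset (A × Fin n) := E.filter (fun pr => F pr.1 = Sum.inl pr.2) with hM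
  have hMmatch : ∀ p ∈ M, ∀ q ∈ M, p ≠ q → p.1 ≠ q.1 ∧ p.2 ≠ q.2 := by
    intro p hp q hq hne
    have hp2 := (Finset.mem_filter.mp hp).2
    have hq2 := (Finset.mem_filter.mp hq).2
    constructor
    · intro h1
      apply hne
      have he : (Sum.inl p.2 : Fin n ⊕ Fin d) = Sum.inl q.2 := by rw [← hp2, ← hq2, h1]
      exact Prod.ext h1 (Sum.inl_injective he)
    · intro h2
      apply hne
      have he : F p.1 = F q.1 := by rw [hp2, hq2, h2]
      exact Prod.ext (hFinj he) h2
  have hMν : M.card ≤ ν := hub M (Finset.filter_subset _ _) hMmatch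
  set A1 := Finset.univ.filter (fun a : A => (F a).isLeft) with hA1
  have hA1M : A1.card ≤ M.card := by
    apply Finset.card_le_card_of_injOn (fun a => (a, ((F a).getLeft?).getD ⟨0, hn⟩))
    · intro a ha
      have hl := (Finset.mem_filter.mp ha).2
      obtain ⟨i, hi⟩ := Sum.isLeft_iff.mp hl
      have hgd : ((F a).getLeft?).getD (⟨0, hn⟩ : Fin n) = i := by rw [hi]; rfl
      show (a, ((F a).getLeft?).getD (⟨0, hn⟩ : Fin n)) ∈ M
      rw [hgd, hM]
      refine Finset.mem_filter.mpr ⟨?_, hi⟩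
      have hta := hFmem a
      rw [hi, ht] at hta
      simp only [Finset.mem_union, Finset.mem_image] at hta
      rcases hta with ⟨j, hj, hji⟩ | ⟨j, -, hji⟩
      · have hji' : j = i := Sum.inl_injective hji
        subst hji'
        obtain ⟨pr, hpr, rfl⟩ := Finset.mem_image.mp hj
        have hpr' := Finset.mem_filter.mp hpr
        have hpa : pr.1 = a := Finset.mem_singleton.mp hpr'.2
        have : pr = (a, pr.2) := Prod.ext hpa rfl
        rw [← this]
        exact hpr'.1
      · exact absurd hji (by simp)
    · intro a _ b _ hab
      exact congrArg Prod.fst hab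
  have hA2 : (Finset.univ.filter (fun a : A => ¬ (F a).isLeft)).card ≤ d := by
    calc (Finset.univ.filter (fun a : A => ¬ (F a).isLeft)).card
        ≤ (Finset.univ.image (Sum.inr : Fin d → Fin n ⊕ Fin d)).card := by
          apply Finset.card_le_card_of_injOn F
          · intro a ha
            have hr := (Finset.mem_filter.mp ha).2
            obtain ⟨j, hj⟩ := Sum.isRight_iff.mp (Sum.not_isLeft.mp hr)
            rw [hj]
            exact Finset.mem_image.mpr ⟨j, Finset.mem_univ _, rfl⟩
          · exact fun a _ b _ hab => hFinj hab
      _ ≤ d := by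
          rw [Finset.card_image_of_injective _ Sum.inr_injective, Finset.card_univ,
            Fintype.card_fin]
  have hsplit : A1.card + (Finset.univ.filter (fun a : A => ¬ (F a).isLeft)).card
      = Fintype.card A := by
    rw [hA1, Finset.card_filter_add_card_filter_not, Finset.card_univ]
  have hgoal : m = (Finset.univ \ S₀).card + (N S₀).card := hm
  omega

lemma opt_le_cover {A : Type*} [Fintype A] [DecidableEq A] {n : ℕ}
    (E : Finset (A × Fin n)) (f : Fin n → Fin n) (CA : Finset A) (CI : Finset (Fin n))
    (hcov : ∀ p ∈ E, p.1 ∈ CA ∨ p.2 ∈ CI) :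
    realizationOPT n E f ≤ CA.card + (Finset.univ.filter (fun t => f t ∈ CI)).card := by
  apply Finset.sup_le
  intro P hP
  obtain ⟨hPe, hPd⟩ := (Finset.mem_filter.mp hP).2
  rw [← Finset.card_filter_add_card_filter_not (s := P) (p := fun p => p.2 ∈ CA)]
  apply Nat.add_le_add
  · apply Finset.card_le_card_of_injOn Prod.snd
    · intro p hp
      exact (Finset.mem_filter.mp hp).2
    · intro p hp q hq hpq
      by_contra hne
      exact (hPd p (Finset.filter_subset _ _ hp) q (Finset.filter_subset _ _ hq) hne).2 hpq
  · apply Finset.card_le_card_of_injOn Prod.fst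
    · intro p hp
      have hp' := Finset.mem_filter.mp hp
      rcases hcov _ (hPe p (Finset.filter_subset _ _ hp)) with hca | hci
      · exact absurd hca hp'.2
      · exact Finset.mem_filter.mpr ⟨Finset.mem_univ _, hci⟩
    · intro p hp q hq hpq
      by_contra hne
      exact (hPd p (Finset.filter_subset _ _ hp) q (Finset.filter_subset _ _ hq) hne).1 hpq

/-- Online stochastic matching with unit arrival rates: for a bipartite graph
with advertiser part `A`, impression part `I = Fin n` (`n ≥ 1`), edge set
`E ⊆ A × I` and maximum matching size `ν`, if `f : Fin n → I` consists of `n`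
i.i.d. uniform draws, then for every `ε > 0`, with probability at least
`1 − e^{−2ε²n}` the maximum matching size of the realization graph is at most
`ν + εn`. -/
theorem realization_opt_upper_bound {A : Type*} [Fintype A] [DecidableEq A]
    (n : ℕ) (hn : 1 ≤ n) (E : Finset (A × Fin n)) (ν : ℕ)
    (hν : IsGreatest {k | ∃ M : Finset (A × Fin n), M ⊆ E ∧
      (∀ p ∈ M, ∀ q ∈ M, p ≠ q → p.1 ≠ q.1 ∧ p.2 ≠ q.2) ∧ M.card = k} ν)
    (ε : ℝ) (hε : 0 < ε) :
    1 - Real.exp (-2 * ε ^ 2 * n) ≤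
      ((Finset.univ.filter (fun f : Fin n → Fin n =>
          (realizationOPT n E f : ℝ) ≤ (ν : ℝ) + ε * n)).card : ℝ) / (n : ℝ) ^ n := by
  obtain ⟨CA, CI, hcov, hcard⟩ := exists_cover hn E ν
    (fun M hME hMm => hν.2 ⟨M, hME, hMm, rfl⟩)
  have hpow : (0 : ℝ) < (n : ℝ) ^ n := by
    have : (0 : ℝ) < n := by exact_mod_cast hn
    positivity
  set Good := Finset.univ.filter (fun f : Fin n → Fin n =>
    (realizationOPT n E f : ℝ) ≤ (ν : ℝ) + ε * n) with hGood
  set Bad := Finset.univ.filter (fun f : Fin n → Fin n =>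
    (CI.card : ℝ) + ε * n <
      ((Finset.univ.filter (fun t => f t ∈ CI)).card : ℝ)) with hBad
  have hBadGood : ∀ f : Fin n → Fin n, f ∉ Bad → f ∈ Good := by
    intro f hf
    have hnb : ¬ ((CI.card : ℝ) + ε * n <
        ((Finset.univ.filter (fun t => f t ∈ CI)).card : ℝ)) := by
      intro hlt
      exact hf (Finset.mem_filter.mpr ⟨Finset.mem_univ _, hlt⟩)
    push_neg at hnb
    refine Finset.mem_filter.mpr ⟨Finset.mem_univ _, ?_⟩
    have h1 := opt_le_cover E f CA CI hcov
    have h1R : (realizationOPT n E f : ℝ)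
        ≤ (CA.card : ℝ) + ((Finset.univ.filter (fun t => f t ∈ CI)).card : ℝ) := by
      exact_mod_cast h1
    have hcR : (CA.card : ℝ) + (CI.card : ℝ) ≤ (ν : ℝ) := by exact_mod_cast hcard
    linarith
  have hcount : ((Finset.univ : Finset (Fin n → Fin n)).card : ℝ)
      ≤ (Good.card : ℝ) + (Bad.card : ℝ) := by
    have h1 : (Finset.univ : Finset (Fin n → Fin n)).card ≤ Good.card + Bad.card := by
      calc (Finset.univ : Finset (Fin n → Fin n)).card ≤ (Good ∪ Bad).card :=
            Finset.card_le_card fun f _ =>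
              Finset.mem_union.mpr (or_iff_not_imp_right.mpr (hBadGood f))
        _ ≤ Good.card + Bad.card := Finset.card_union_le _ _
    exact_mod_cast h1
  have huniv : ((Finset.univ : Finset (Fin n → Fin n)).card : ℝ) = (n : ℝ) ^ n := by
    rw [Finset.card_univ, Fintype.card_fun, Fintype.card_fin]
    push_cast
    ring
  have hBadBound := count_hoeffding n hn CI ε hε
  rw [← hBad] at hBadBound
  rw [le_div_iff₀ hpow]
  nlinarith [Real.exp_pos (-2 * ε ^ 2 * (n : ℝ))]
end
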